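/- arXiv:2012.10107 — 6 statements merged into one kernel-verified Lean document; each statement's English description precedes it below -/
import Mathlib

section
/- Let q ∈ L¹([0,1],ℝ), t ∈ (0,1), and let φ, ψ be solutions of −y'' + q y = 0 on [0,1] with φ(0) = 0, φ'(0) = 1, ψ(1) = 0, Wronskian W[φ,ψ] = ω ≠ 0, and suppose φ(t) ≠ 0 and ψ(t) ≠ 0. Then λ ∈ ℂ is a Dirichlet eigenvalue of the problem −y'' + q y = λ δ(x−t) y, y(0) = y(1) = 0, if and only if 1 + (λ/ω)·φ(t)ψ(t) = 0; hence the problem has the unique eigenvalue λ(t,q) = −ω/(φ(t)ψ(t)) ≠ 0. -/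
/-!
On each side of `t` an eigenfunction solves the unperturbed equation, and solutions of the
Carathéodory initial value problem are unique (a Grönwall argument with the `L¹` kernel `1 + |q|`).
Since `φ, ψ` form a fundamental system, an eigenfunction is `A φ` on `[0, t]` and `D ψ` on `[t, 1]`;
continuity at `t` and the jump condition then give `A (λ φ(t) ψ(t) + ω) = 0` with `A ≠ 0`.
Conversely, `ψ(t) φ` on `[0, t]` glued to `φ(t) ψ` on `[t, 1]` is an eigenfunction for
`λ = -ω / (φ(t) ψ(t))`.
-/

open Set MeasureTheory intervalIntegral

/-- `y` is a real Carathéodory solution of `-y'' + q y = 0` on `[a,b]`. -/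
def IsSolutionOn (q y y' : ℝ → ℝ) (a b : ℝ) : Prop :=
  (∀ x ∈ Set.Icc a b, HasDerivWithinAt y (y' x) (Set.Icc a b) x) ∧
  (∀ x ∈ Set.Icc a b, y' x = y' a + ∫ s in a..x, q s * y s)

/-- `l ∈ ℂ` is a Dirichlet eigenvalue of `-y'' + q y = l·δ(x - t)·y`,
`y(0) = y(1) = 0`:  there is a nontrivial `y ∈ AC[0,1]`, with `y'` absolutely
continuous on `[0,t]` and `[t,1]` (derivative functions `g₁, g₂` satisfying the
integral form of `y'' = q y`), the jump condition
`y'(t⁻) - y'(t⁺) = l·y(t)` and `y(0) = y(1) = 0`. -/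
def DiracEigen (q : ℝ → ℝ) (t : ℝ) (l : ℂ) : Prop :=
  ∃ y g₁ g₂ : ℝ → ℂ,
    ContinuousOn y (Set.Icc 0 1) ∧
    (∀ x ∈ Set.Icc 0 t, HasDerivWithinAt y (g₁ x) (Set.Icc 0 t) x) ∧
    (∀ x ∈ Set.Icc 0 t, g₁ x = g₁ 0 + ∫ s in (0:ℝ)..x, (q s : ℂ) * y s) ∧
    (∀ x ∈ Set.Icc t 1, HasDerivWithinAt y (g₂ x) (Set.Icc t 1) x) ∧
    (∀ x ∈ Set.Icc t 1, g₂ x = g₂ t + ∫ s in t..x, (q s : ℂ) * y s) ∧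
    g₁ t - g₂ t = l * y t ∧
    y 0 = 0 ∧ y 1 = 0 ∧
    (∃ x ∈ Set.Icc (0:ℝ) 1, y x ≠ 0)

open Filter Topology

theorem eventually_nhdsGT_intervalIntegral_lt {k : ℝ → ℝ} {x b ε : ℝ}
    (hk : IntervalIntegrable k volume x b) (hxb : x < b) (hε : 0 < ε) :
    ∀ᶠ y in 𝓝[>] x, ∫ s in x..y, k s < ε := by
  have hK := continuousWithinAt_primitive (a := x) (b₁ := x) (b₂ := b) (b₀ := x)
    Real.volume_singleton (by rwa [min_self, max_eq_right hxb.le])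
  have := (hK.mono_of_mem_nhdsWithin (Icc_mem_nhdsGT hxb)).tendsto
  rw [integral_same] at this
  exact this (Iio_mem_nhds hε)

theorem eqOn_zero_of_le_integral_mul {a b : ℝ} {k u : ℝ → ℝ}
    (hk : IntegrableOn k (Icc a b)) (hk0 : ∀ x ∈ Icc a b, 0 ≤ k x)
    (hu : ContinuousOn u (Icc a b)) (hu0 : ∀ x ∈ Icc a b, 0 ≤ u x)
    (hle : ∀ x ∈ Icc a b, u x ≤ ∫ s in a..x, k s * u s) :
    ∀ x ∈ Icc a b, u x = 0 := by
  set G : ℝ → ℝ := fun x => ∫ s in a..x, k s * u s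
  have hku : IntegrableOn (fun s => k s * u s) (Icc a b) :=
    hk.mul_continuousOn hu isCompact_Icc
  have hkuI {x y : ℝ} (hx : x ∈ Icc a b) (hy : y ∈ Icc a b) :
      IntervalIntegrable (fun s => k s * u s) volume x y :=
    (hku.mono_set (uIcc_subset_Icc hx hy)).intervalIntegrable
  have hG_sub {x y : ℝ} (hx : x ∈ Icc a b) (hy : y ∈ Icc a b) :
      G y - G x = ∫ s in x..y, k s * u s :=
    integral_interval_sub_left (hkuI (left_mem_Icc.2 (hx.1.trans hx.2)) hy)
      (hkuI (left_mem_Icc.2 (hx.1.trans hx.2)) hx)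
  have hG_mono {x y : ℝ} (hx : x ∈ Icc a b) (hy : y ∈ Icc a b) (hxy : x ≤ y) : G x ≤ G y := by
    have : 0 ≤ ∫ s in x..y, k s * u s := integral_nonneg hxy fun s hs =>
      have hs : s ∈ Icc a b := ⟨hx.1.trans hs.1, hs.2.trans hy.2⟩
      mul_nonneg (hk0 s hs) (hu0 s hs)
    linarith [hG_sub hx hy]
  have hGc : ContinuousOn G (Icc a b) := by
    intro x hx
    have hab : a ≤ b := hx.1.trans hx.2
    have := continuousOn_primitive_interval' (hkuI (left_mem_Icc.2 hab) (right_mem_Icc.2 hab))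
      left_mem_uIcc
    rw [uIcc_of_le hab] at this
    exact this x hx
  have hG_nonpos : Icc a b ⊆ {x | G x ≤ 0} := by
    refine IsClosed.Icc_subset_of_forall_mem_nhdsWithin ?_ (by simp [G]) ?_
    · rw [inter_comm]; exact hGc.preimage_isClosed_of_isClosed isClosed_Icc isClosed_Iic
    rintro x ⟨hGx, hx⟩
    have hxI : x ∈ Icc a b := Ico_subset_Icc_self hx
    have hsmall := eventually_nhdsGT_intervalIntegral_lt (hk.mono_set
      (uIcc_subset_Icc hxI (right_mem_Icc.2 (hx.1.trans hx.2.le)))).intervalIntegrable hx.2 one_pos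
    filter_upwards [Icc_mem_nhdsGT hx.2, hsmall] with y hy hKy
    have hyI : y ∈ Icc a b := ⟨hx.1.trans hy.1, hy.2⟩
    -- On `[x, y]` we have `u ≤ G ≤ G y`, so `G y ≤ G x + (∫ s in x..y, k s) * G y`.
    have hbound : ∫ s in x..y, k s * u s ≤ (∫ s in x..y, k s) * G y := by
      rw [← intervalIntegral.integral_mul_const]
      refine integral_mono_on hy.1 (hkuI hxI hyI)
        ((hk.mono_set (uIcc_subset_Icc hxI hyI)).intervalIntegrable.mul_const _) fun s hs => ?_
      have hs' : s ∈ Icc a b := ⟨hx.1.trans hs.1, hs.2.trans hy.2⟩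
      exact mul_le_mul_of_nonneg_left ((hle s hs').trans (hG_mono hs' hyI hs.2)) (hk0 s hs')
    have : (1 - ∫ s in x..y, k s) * G y ≤ 0 := by linarith [hG_sub hxI hyI, hGx.out]
    exact nonpos_of_mul_nonpos_right this (sub_pos.2 hKy)
  exact fun x hx => le_antisymm ((hle x hx).trans (hG_nonpos hx)) (hu0 x hx)

def IsComplexSolutionOn (q : ℝ → ℝ) (y y' : ℝ → ℂ) (a b : ℝ) : Prop :=
  (∀ x ∈ Icc a b, HasDerivWithinAt y (y' x) (Icc a b) x) ∧
  (∀ x ∈ Icc a b, y' x = y' a + ∫ s in a..x, (q s : ℂ) * y s)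

theorem IsSolutionOn.ofReal {q y y' : ℝ → ℝ} {a b : ℝ} (h : IsSolutionOn q y y' a b) :
    IsComplexSolutionOn q (fun x => (y x : ℂ)) (fun x => (y' x : ℂ)) a b := by
  refine ⟨fun x hx => (h.1 x hx).ofReal_comp, fun x hx => ?_⟩
  simp only [h.2 x hx, Complex.ofReal_add, ← intervalIntegral.integral_ofReal, Complex.ofReal_mul]

namespace IsComplexSolutionOn

variable {q : ℝ → ℝ} {y y' z z' : ℝ → ℂ} {a b : ℝ}

theorem continuousOn (h : IsComplexSolutionOn q y y' a b) : ContinuousOn y (Icc a b) :=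
  fun x hx => (h.1 x hx).continuousWithinAt

theorem intervalIntegrable_mul (hq : IntegrableOn q (Icc a b)) (h : IsComplexSolutionOn q y y' a b)
    {c d : ℝ} (hc : c ∈ Icc a b) (hd : d ∈ Icc a b) :
    IntervalIntegrable (fun s => (q s : ℂ) * y s) volume c d :=
  ((IntegrableOn.mul_continuousOn hq.ofReal h.continuousOn isCompact_Icc).mono_set
    (uIcc_subset_Icc hc hd)).intervalIntegrable

theorem continuousOn_deriv (hq : IntegrableOn q (Icc a b)) (h : IsComplexSolutionOn q y y' a b) :
    ContinuousOn y' (Icc a b) := by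
  intro x hx
  have hab : a ≤ b := hx.1.trans hx.2
  have := continuousOn_primitive_interval'
    (h.intervalIntegrable_mul hq (left_mem_Icc.2 hab) (right_mem_Icc.2 hab)) left_mem_uIcc
  rw [uIcc_of_le hab] at this
  exact ((continuousOn_const.add this).congr h.2) x hx

theorem eq_add_integral_deriv (hq : IntegrableOn q (Icc a b)) (h : IsComplexSolutionOn q y y' a b)
    {x : ℝ} (hx : x ∈ Icc a b) : y x = y a + ∫ s in a..x, y' s := by
  have hsub : Icc a x ⊆ Icc a b := Icc_subset_Icc le_rfl hx.2
  rw [integral_eq_sub_of_hasDerivAt_of_le hx.1 (h.continuousOn.mono hsub)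
    (fun s hs => (h.1 s (Ioo_subset_Icc_self ⟨hs.1, hs.2.trans_le hx.2⟩)).hasDerivAt
      (Icc_mem_nhds hs.1 (hs.2.trans_le hx.2)))
    (((h.continuousOn_deriv hq).mono hsub).intervalIntegrable_of_Icc hx.1)]
  ring

theorem mono (hq : IntegrableOn q (Icc a b)) (h : IsComplexSolutionOn q y y' a b) {c d : ℝ}
    (hc : a ≤ c) (hd : d ≤ b) : IsComplexSolutionOn q y y' c d := by
  have hsub : Icc c d ⊆ Icc a b := Icc_subset_Icc hc hd
  refine ⟨fun x hx => (h.1 x (hsub hx)).mono hsub, fun x hx => ?_⟩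
  have hcI : c ∈ Icc a b := hsub (left_mem_Icc.2 (hx.1.trans hx.2))
  rw [h.2 x (hsub hx), h.2 c hcI, add_assoc, integral_add_adjacent_intervals
    (h.intervalIntegrable_mul hq (left_mem_Icc.2 (hc.trans hcI.2)) hcI)
    (h.intervalIntegrable_mul hq hcI (hsub hx))]

theorem congr (h : IsComplexSolutionOn q y y' a b) (hz : EqOn z y (Icc a b))
    (hz' : EqOn z' y' (Icc a b)) : IsComplexSolutionOn q z z' a b := by
  refine ⟨fun x hx => (h.1 x hx).congr hz (hz hx) |>.congr_deriv (hz' hx).symm, fun x hx => ?_⟩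
  rw [hz' hx, hz' (left_mem_Icc.2 (hx.1.trans hx.2)), h.2 x hx]
  congr 1
  refine integral_congr fun s hs => ?_
  rw [uIcc_of_le hx.1] at hs
  simp only [hz ⟨hs.1, hs.2.trans hx.2⟩]

theorem const_mul (h : IsComplexSolutionOn q y y' a b) (c : ℂ) :
    IsComplexSolutionOn q (fun x => c * y x) (fun x => c * y' x) a b := by
  refine ⟨fun x hx => (h.1 x hx).const_mul c, fun x hx => ?_⟩
  simp only [h.2 x hx, mul_left_comm _ c, intervalIntegral.integral_const_mul]
  ring

theorem sub (hq : IntegrableOn q (Icc a b)) (h : IsComplexSolutionOn q y y' a b)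
    (hz : IsComplexSolutionOn q z z' a b) :
    IsComplexSolutionOn q (fun x => y x - z x) (fun x => y' x - z' x) a b := by
  refine ⟨fun x hx => (h.1 x hx).sub (hz.1 x hx), fun x hx => ?_⟩
  have ha : a ∈ Icc a b := left_mem_Icc.2 (hx.1.trans hx.2)
  simp only [mul_sub]
  rw [integral_sub (h.intervalIntegrable_mul hq ha hx) (hz.intervalIntegrable_mul hq ha hx),
    h.2 x hx, hz.2 x hx]
  ring

theorem add (hq : IntegrableOn q (Icc a b)) (h : IsComplexSolutionOn q y y' a b)
    (hz : IsComplexSolutionOn q z z' a b) :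
    IsComplexSolutionOn q (fun x => y x + z x) (fun x => y' x + z' x) a b := by
  refine ⟨fun x hx => (h.1 x hx).add (hz.1 x hx), fun x hx => ?_⟩
  have ha : a ∈ Icc a b := left_mem_Icc.2 (hx.1.trans hx.2)
  simp only [mul_add]
  rw [integral_add (h.intervalIntegrable_mul hq ha hx) (hz.intervalIntegrable_mul hq ha hx),
    h.2 x hx, hz.2 x hx]
  ring

theorem eq_zero_of_initial_eq_zero (hq : IntegrableOn q (Icc a b))
    (h : IsComplexSolutionOn q y y' a b)
    (ha : y a = 0) (ha' : y' a = 0) : ∀ x ∈ Icc a b, y x = 0 ∧ y' x = 0 := by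
  have hyc := h.continuousOn
  have hy'c := h.continuousOn_deriv hq
  have hk : IntegrableOn (fun s => 1 + |q s|) (Icc a b) :=
    (integrableOn_const measure_Icc_lt_top.ne).add hq.abs
  have huc : ContinuousOn (fun s => ‖y s‖ + ‖y' s‖) (Icc a b) := hyc.norm.add hy'c.norm
  have hqy : IntegrableOn (fun s => |q s| * ‖y s‖) (Icc a b) :=
    IntegrableOn.mul_continuousOn hq.abs hyc.norm isCompact_Icc
  have hku := hk.mul_continuousOn huc isCompact_Icc
  have hu := eqOn_zero_of_le_integral_mul hk (fun x _ => by positivity) huc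
    (fun x _ => by positivity) fun x hx => by
      have hsub : uIcc a x ⊆ Icc a b := by
        rw [uIcc_of_le hx.1]; exact Icc_subset_Icc le_rfl hx.2
      have hy : ‖y x‖ ≤ ∫ s in a..x, ‖y' s‖ := by
        rw [h.eq_add_integral_deriv hq hx, ha, zero_add]
        exact intervalIntegral.norm_integral_le_integral_norm hx.1
      have hy' : ‖y' x‖ ≤ ∫ s in a..x, |q s| * ‖y s‖ := by
        rw [h.2 x hx, ha', zero_add]
        refine (intervalIntegral.norm_integral_le_integral_norm hx.1).trans_eq ?_
        simp only [norm_mul, Complex.norm_real, Real.norm_eq_abs]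
      calc ‖y x‖ + ‖y' x‖
          ≤ (∫ s in a..x, ‖y' s‖) + ∫ s in a..x, |q s| * ‖y s‖ := add_le_add hy hy'
        _ = ∫ s in a..x, (‖y' s‖ + |q s| * ‖y s‖) :=
          (integral_add ((hy'c.norm.mono hsub).intervalIntegrable)
            (hqy.mono_set hsub).intervalIntegrable).symm
        _ ≤ ∫ s in a..x, (1 + |q s|) * (‖y s‖ + ‖y' s‖) := by
          refine integral_mono_on hx.1 (((hy'c.norm.mono hsub).intervalIntegrable).add
            (hqy.mono_set hsub).intervalIntegrable) (hku.mono_set hsub).intervalIntegrable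
            fun s _ => ?_
          nlinarith [abs_nonneg (q s), norm_nonneg (y s), norm_nonneg (y' s)]
  exact fun x hx => ((add_eq_zero_iff_of_nonneg (norm_nonneg _) (norm_nonneg _)).1
    (hu x hx)).imp norm_eq_zero.1 norm_eq_zero.1

theorem exists_eq_mul_add_mul (hq : IntegrableOn q (Icc a b)) {u u' v v' : ℝ → ℂ}
    (hu : IsComplexSolutionOn q u u' a b) (hv : IsComplexSolutionOn q v v' a b)
    (hW : u a * v' a - u' a * v a ≠ 0) (hy : IsComplexSolutionOn q y y' a b) :
    ∃ A B : ℂ, ∀ x ∈ Icc a b, y x = A * u x + B * v x ∧ y' x = A * u' x + B * v' x := by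
  set A := (y a * v' a - y' a * v a) / (u a * v' a - u' a * v a)
  set B := (u a * y' a - u' a * y a) / (u a * v' a - u' a * v a)
  have hz := hy.sub hq (hu.const_mul A |>.add hq (hv.const_mul B))
  have hza : y a - (A * u a + B * v a) = 0 := by
    rw [sub_eq_zero, div_mul_eq_mul_div, div_mul_eq_mul_div, ← add_div, eq_div_iff hW]
    ring
  have hza' : y' a - (A * u' a + B * v' a) = 0 := by
    rw [sub_eq_zero, div_mul_eq_mul_div, div_mul_eq_mul_div, ← add_div, eq_div_iff hW]
    ring
  refine ⟨A, B, fun x hx => ?_⟩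
  have h0 := hz.eq_zero_of_initial_eq_zero hq hza hza' x hx
  exact ⟨sub_eq_zero.1 h0.1, sub_eq_zero.1 h0.2⟩

end IsComplexSolutionOn

section DiracEigen

variable {q φ ψ φ' ψ' : ℝ → ℝ} {t ω : ℝ}

theorem DiracEigen.mul_eq_neg (ht : t ∈ Ioo (0 : ℝ) 1) (hq : IntegrableOn q (Icc 0 1))
    (hφ : IsSolutionOn q φ φ' 0 1) (hψ : IsSolutionOn q ψ ψ' 0 1) (hφ0 : φ 0 = 0)
    (hψ1 : ψ 1 = 0) (hω : ω ≠ 0) (hW : ∀ x ∈ Icc (0 : ℝ) 1, φ x * ψ' x - φ' x * ψ x = ω)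
    (hψt : ψ t ≠ 0) {l : ℂ} (hl : DiracEigen q t l) :
    l * ((φ t : ℂ) * (ψ t : ℂ)) = -(ω : ℂ) := by
  obtain ⟨y, g₁, g₂, -, hd₁, hi₁, hd₂, hi₂, hjump, hy0, hy1, x₀, hx₀, hyx₀⟩ := hl
  have hWC : ∀ x ∈ Icc (0 : ℝ) 1, (φ x : ℂ) * ψ' x - φ' x * ψ x = ω := fun x hx => by
    exact_mod_cast hW x hx
  have hφC := hφ.ofReal
  have hψC := hψ.ofReal
  have hψ0 : (ψ 0 : ℂ) ≠ 0 := fun h => hω (by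
    simpa [hφ0, h] using (hWC 0 (left_mem_Icc.2 zero_le_one)).symm)
  have hφ1 : (φ 1 : ℂ) ≠ 0 := fun h => hω (by
    simpa [hψ1, h] using (hWC 1 (right_mem_Icc.2 zero_le_one)).symm)
  obtain ⟨A, B, hAB⟩ := IsComplexSolutionOn.exists_eq_mul_add_mul (hq.mono_set
    (Icc_subset_Icc le_rfl ht.2.le)) (hφC.mono hq le_rfl ht.2.le) (hψC.mono hq le_rfl ht.2.le)
    (by rw [hWC 0 (left_mem_Icc.2 zero_le_one)]; exact_mod_cast hω) ⟨hd₁, hi₁⟩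
  obtain ⟨C, D, hCD⟩ := IsComplexSolutionOn.exists_eq_mul_add_mul (hq.mono_set
    (Icc_subset_Icc ht.1.le le_rfl)) (hφC.mono hq ht.1.le le_rfl) (hψC.mono hq ht.1.le le_rfl)
    (by rw [hWC t (Ioo_subset_Icc_self ht)]; exact_mod_cast hω) ⟨hd₂, hi₂⟩
  have hB : B = 0 := by
    have := (hAB 0 (left_mem_Icc.2 ht.1.le)).1
    simp only [hy0, hφ0, Complex.ofReal_zero, mul_zero, zero_add] at this
    exact (mul_eq_zero.1 this.symm).resolve_right hψ0
  have hC : C = 0 := by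
    have := (hCD 1 (right_mem_Icc.2 ht.2.le)).1
    simp only [hy1, hψ1, Complex.ofReal_zero, mul_zero, add_zero] at this
    exact (mul_eq_zero.1 this.symm).resolve_right hφ1
  subst hB hC
  simp only [zero_mul, add_zero, zero_add] at hAB hCD
  obtain ⟨hyt, hg₁t⟩ := hAB t (right_mem_Icc.2 ht.1.le)
  obtain ⟨hyt', hg₂t⟩ := hCD t (left_mem_Icc.2 ht.2.le)
  have hA : A ≠ 0 := by
    rintro rfl
    have hD : D = 0 := by
      have : D * ψ t = 0 := by rw [← hyt', hyt, zero_mul]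
      exact (mul_eq_zero.1 this).resolve_right (Complex.ofReal_ne_zero.2 hψt)
    rcases le_total x₀ t with hx | hx
    · exact hyx₀ (by simp [(hAB x₀ ⟨hx₀.1, hx⟩).1])
    · exact hyx₀ (by simp [(hCD x₀ ⟨hx, hx₀.2⟩).1, hD])
  refine mul_left_cancel₀ hA ?_
  linear_combination (ψ' t : ℂ) * (hyt' - hyt) + (ψ t : ℂ) * (hg₁t - hg₂t - hjump)
    - l * (ψ t : ℂ) * hyt - A * hWC t (Ioo_subset_Icc_self ht)

theorem diracEigen_of_mul_eq_neg (ht : t ∈ Ioo (0 : ℝ) 1) (hq : IntegrableOn q (Icc 0 1))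
    (hφ : IsSolutionOn q φ φ' 0 1) (hψ : IsSolutionOn q ψ ψ' 0 1) (hφ0 : φ 0 = 0)
    (hψ1 : ψ 1 = 0) (hWt : φ t * ψ' t - φ' t * ψ t = ω) (hφt : φ t ≠ 0) (hψt : ψ t ≠ 0)
    {l : ℂ} (hl : l * ((φ t : ℂ) * (ψ t : ℂ)) = -(ω : ℂ)) : DiracEigen q t l := by
  set y : ℝ → ℂ := fun x => if x ≤ t then ψ t * φ x else φ t * ψ x
  have hleft : IsComplexSolutionOn q y (fun x => ψ t * φ' x) 0 t :=
    ((hφ.ofReal.mono hq le_rfl ht.2.le).const_mul (ψ t)).congr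
      (fun x hx => if_pos hx.2) fun _ _ => rfl
  have hright : IsComplexSolutionOn q y (fun x => φ t * ψ' x) t 1 :=
    ((hψ.ofReal.mono hq ht.1.le le_rfl).const_mul (φ t)).congr
      (fun x hx => by
        rcases hx.1.eq_or_lt with rfl | hlt
        · simp only [y, if_pos le_rfl, mul_comm]
        · exact if_neg hlt.not_ge)
      fun _ _ => rfl
  have hyt : y t = ψ t * φ t := if_pos le_rfl
  refine ⟨y, _, _, ?_, hleft.1, hleft.2, hright.1, hright.2, ?_, ?_, ?_, t,
    Ioo_subset_Icc_self ht, ?_⟩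
  · rw [← Icc_union_Icc_eq_Icc ht.1.le ht.2.le]
    exact hleft.continuousOn.union_of_isClosed hright.continuousOn isClosed_Icc isClosed_Icc
  · have hWC : (φ t : ℂ) * ψ' t - φ' t * ψ t = ω := by exact_mod_cast hWt
    rw [hyt]
    linear_combination -hWC - hl
  · simp [y, ht.1.le, hφ0]
  · simp [y, ht.2.not_ge, hψ1]
  · rw [hyt]
    exact mul_ne_zero (Complex.ofReal_ne_zero.2 hψt) (Complex.ofReal_ne_zero.2 hφt)

end DiracEigen

theorem stmt_6_general (q φ ψ φ' ψ' : ℝ → ℝ) (t : ℝ) (ht : t ∈ Set.Ioo (0:ℝ) 1)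
    (hq : MeasureTheory.IntegrableOn q (Set.Icc 0 1))
    (hφ : IsSolutionOn q φ φ' 0 1) (hψ : IsSolutionOn q ψ ψ' 0 1)
    (hφ0 : φ 0 = 0) (hψ1 : ψ 1 = 0)
    (ω : ℝ) (hω : ω ≠ 0)
    (hW : ∀ x ∈ Set.Icc (0:ℝ) 1, φ x * ψ' x - φ' x * ψ x = ω)
    (hφt : φ t ≠ 0) (hψt : ψ t ≠ 0) :
    (∀ l : ℂ, DiracEigen q t l ↔ 1 + (l / (ω : ℂ)) * ((φ t : ℂ) * (ψ t : ℂ)) = 0) ∧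
    (∀ l : ℂ, DiracEigen q t l ↔ l = -(ω : ℂ) / ((φ t : ℂ) * (ψ t : ℂ))) ∧
    -(ω : ℂ) / ((φ t : ℂ) * (ψ t : ℂ)) ≠ 0 := by
  have hωC : (ω : ℂ) ≠ 0 := Complex.ofReal_ne_zero.2 hω
  have hφψ : (φ t : ℂ) * (ψ t : ℂ) ≠ 0 :=
    mul_ne_zero (Complex.ofReal_ne_zero.2 hφt) (Complex.ofReal_ne_zero.2 hψt)
  have hiff (l : ℂ) : DiracEigen q t l ↔ l * ((φ t : ℂ) * (ψ t : ℂ)) = -(ω : ℂ) :=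
    ⟨DiracEigen.mul_eq_neg ht hq hφ hψ hφ0 hψ1 hω hW hψt,
      diracEigen_of_mul_eq_neg ht hq hφ hψ hφ0 hψ1 (hW t (Ioo_subset_Icc_self ht)) hφt hψt⟩
  refine ⟨fun l => (hiff l).trans ?_, fun l => (hiff l).trans ?_,
    div_ne_zero (neg_ne_zero.2 hωC) hφψ⟩
  · rw [div_mul_eq_mul_div, one_add_div hωC, div_eq_zero_iff, or_iff_left hωC, add_comm,
      add_eq_zero_iff_eq_neg]
  · rw [eq_div_iff hφψ]

/-- For the single-Dirac-weight problem with `φ(t) ≠ 0 ≠ ψ(t)`: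
`l` is a Dirichlet eigenvalue iff `1 + (l/ω)·φ(t)ψ(t) = 0`; hence the unique
eigenvalue is `λ(t,q) = -ω/(φ(t)ψ(t)) ≠ 0`. -/
theorem stmt_6 (q φ ψ φ' ψ' : ℝ → ℝ) (t : ℝ) (ht : t ∈ Set.Ioo (0:ℝ) 1)
    (hq : MeasureTheory.IntegrableOn q (Set.Icc 0 1))
    (hφ : IsSolutionOn q φ φ' 0 1) (hψ : IsSolutionOn q ψ ψ' 0 1)
    (hφ0 : φ 0 = 0) (hφ'0 : φ' 0 = 1) (hψ1 : ψ 1 = 0)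
    (ω : ℝ) (hω : ω ≠ 0)
    (hW : ∀ x ∈ Set.Icc (0:ℝ) 1, φ x * ψ' x - φ' x * ψ x = ω)
    (hφt : φ t ≠ 0) (hψt : ψ t ≠ 0) :
    (∀ l : ℂ, DiracEigen q t l ↔ 1 + (l / (ω : ℂ)) * ((φ t : ℂ) * (ψ t : ℂ)) = 0) ∧
    (∀ l : ℂ, DiracEigen q t l ↔ l = -(ω : ℂ) / ((φ t : ℂ) * (ψ t : ℂ))) ∧
    -(ω : ℂ) / ((φ t : ℂ) * (ψ t : ℂ)) ≠ 0 :=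
  stmt_6_general q φ ψ φ' ψ' t ht hq hφ hψ hφ0 hψ1 ω hω hW hφt hψt
end

section
/- Let f : (0,1) → (0,∞) be continuous with ∫ₐ¹ f(s) ds = +∞ for some (hence all) a ∈ (0,1). Let φ : (0,1) → (0,∞) satisfy φ(x) = C·f(x)^{−1/2}·exp(½∫ₐˣ f(s) ds) for some C > 0, and define ψ(x) = φ(x)·∫ₓ¹ ds/φ(s)². Then for every x ∈ (0,1), 1/(φ(x)·ψ(x)) = f(x), i.e., φ(x)²·∫ₓ¹ ds/φ(s)² = 1/f(x). -/
open Set MeasureTheory intervalIntegral Filter Topology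

/-! With `F = ∫ₐ f`, the formula for `φ` says `φ⁻² = C⁻² f e^{-F} = C⁻² (-e^{-F})'`. As `f > 0` is
not integrable near `1`, `F → ∞` there, so `-e^{-F}` vanishes at `1` and
`∫ₓ¹ φ⁻² = C⁻² e^{-F(x)} = φ(x)⁻² / f(x)`. -/

theorem hasDerivAt_integral_of_continuousOn_Ioo {E : Type*} [NormedAddCommGroup E]
    [NormedSpace ℝ E] [CompleteSpace E] {f : ℝ → E} {l u a x : ℝ}
    (hf : ContinuousOn f (Ioo l u)) (ha : a ∈ Ioo l u) (hx : x ∈ Ioo l u) :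
    HasDerivAt (fun y => ∫ s in a..y, f s) (f x) x :=
  integral_hasDerivAt_right
    ((hf.mono (ordConnected_Ioo.uIcc_subset ha hx)).intervalIntegrable)
    (hf.stronglyMeasurableAtFilter isOpen_Ioo x hx)
    (hf.continuousAt (isOpen_Ioo.mem_nhds hx))

theorem tendsto_integral_nhdsLT_atTop_of_not_integrableOn {f : ℝ → ℝ} {a b : ℝ} (hab : a < b)
    (hfc : ContinuousOn f (Ico a b)) (hf : ∀ x ∈ Ioo a b, 0 ≤ f x)
    (hnot : ¬ IntegrableOn f (Ioo a b)) :
    Tendsto (fun y => ∫ s in a..y, f s) (𝓝[<] b) atTop := by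
  have hfc' : ∀ y ∈ Ioo a b, ContinuousOn f (Icc a y) := fun y hy =>
    hfc.mono (Icc_subset_Ico_right hy.2)
  rw [tendsto_atTop]
  intro M
  obtain ⟨y₀, hy₀, hMy₀⟩ : ∃ y₀ ∈ Ioo a b, M ≤ ∫ s in a..y₀, f s := by
    by_contra! hbdd
    obtain ⟨u, -, hu, hu_lim⟩ := exists_seq_strictMono_tendsto' hab
    refine hnot ((integrableOn_Ioc_of_intervalIntegral_norm_bounded_right (I := M)
      (fun n => (hfc' _ (hu n)).integrableOn_Icc.mono_set Ioc_subset_Icc_self) hu_lim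
      (Eventually.of_forall fun n => ?_)).mono_set Ioo_subset_Ioc_self)
    calc ∫ s in Ioc a (u n), ‖f s‖ = ∫ s in a..u n, f s := by
          rw [integral_of_le (hu n).1.le]
          exact setIntegral_congr_fun measurableSet_Ioc fun s hs =>
            Real.norm_of_nonneg (hf s ⟨hs.1, hs.2.trans_lt (hu n).2⟩)
      _ ≤ M := (hbdd _ (hu n)).le
  filter_upwards [Ioo_mem_nhdsLT hy₀.2] with y hy
  have hay : a < y := hy₀.1.trans hy.1
  have hf_ae : 0 ≤ᵐ[volume.restrict (Ioc a y)] f :=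
    (ae_restrict_iff' measurableSet_Ioc).2 <|
      ae_of_all _ fun s hs => hf s ⟨hs.1, hs.2.trans_lt hy.2⟩
  exact hMy₀.trans (integral_mono_interval le_rfl hy₀.1.le hy.1.le hf_ae
    ((hfc' y ⟨hay, hy.2⟩).intervalIntegrable_of_Icc hay.le))

theorem mul_inv_sqrt_mul_exp_half_sq {C f F : ℝ} (hf : 0 ≤ f) :
    (C * (√f)⁻¹ * Real.exp (1 / 2 * F)) ^ 2 = C ^ 2 * Real.exp F / f := by
  rw [mul_pow, mul_pow, inv_pow, Real.sq_sqrt hf, ← Real.exp_nat_mul]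
  ring_nf

theorem integral_eq_exp_neg_of_hasDerivAt_of_tendsto_atTop {f F g : ℝ → ℝ} {x b : ℝ}
    (hxb : x < b) (hF : ∀ y ∈ Ico x b, HasDerivAt F (f y) y) (hF_top : Tendsto F (𝓝[<] b) atTop)
    (hg : ∀ y ∈ Ioo x b, g y = f y * Real.exp (-F y)) (hint : IntervalIntegrable g volume x b) :
    ∫ s in x..b, g s = Real.exp (-F x) := by
  have hG : ∀ y ∈ Ico x b, HasDerivAt (fun s => -Real.exp (-F s)) (f y * Real.exp (-F y)) y :=
    fun y hy => ((hF y hy).neg.exp.neg).congr_deriv (by simp [mul_comm])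
  have hG_x : Tendsto (fun s => -Real.exp (-F s)) (𝓝[>] x) (𝓝 (-Real.exp (-F x))) :=
    (hG x ⟨le_rfl, hxb⟩).continuousAt.tendsto.mono_left nhdsWithin_le_nhds
  have hG_b : Tendsto (fun s => -Real.exp (-F s)) (𝓝[<] b) (𝓝 0) := by
    simpa using (Real.tendsto_exp_atBot.comp (tendsto_neg_atTop_atBot.comp hF_top)).neg
  rw [integral_eq_sub_of_hasDerivAt_of_tendsto hxb
    (fun y hy => (hg y hy).symm ▸ hG y (Ioo_subset_Ico_self hy)) hint hG_x hG_b, zero_sub, neg_neg]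

theorem stmt_12_general (f : ℝ → ℝ)
    (hfc : ContinuousOn f (Set.Ioo 0 1))
    (hf : ∀ x ∈ Set.Ioo (0:ℝ) 1, 0 < f x)
    (a : ℝ) (ha : a ∈ Set.Ioo (0:ℝ) 1)
    (hdiv : ∀ b ∈ Set.Ioo (0:ℝ) 1,
      ∫⁻ s in Set.Ioo b 1, ENNReal.ofReal (f s) = ⊤)
    (C : ℝ) (hC : 0 < C) (φ ψ : ℝ → ℝ)
    (hφ : ∀ x ∈ Set.Ioo (0:ℝ) 1,
      φ x = C * (Real.sqrt (f x))⁻¹ * Real.exp ((1/2) * ∫ s in a..x, f s))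
    (hint : ∀ x ∈ Set.Ioo (0:ℝ) 1,
      IntervalIntegrable (fun s => ((φ s) ^ 2)⁻¹) MeasureTheory.volume x 1)
    (hψ : ∀ x ∈ Set.Ioo (0:ℝ) 1, ψ x = φ x * ∫ s in x..1, ((φ s) ^ 2)⁻¹) :
    ∀ x ∈ Set.Ioo (0:ℝ) 1,
      (φ x) ^ 2 * (∫ s in x..1, ((φ s) ^ 2)⁻¹) = 1 / f x ∧
      (φ x * ψ x)⁻¹ = f x := by
  intro x hx
  set F : ℝ → ℝ := fun y => ∫ s in a..y, f s
  have hφ_sq : ∀ y ∈ Ioo (0:ℝ) 1, φ y ^ 2 = C ^ 2 * Real.exp (F y) / f y := fun y hy => by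
    rw [hφ y hy, mul_inv_sqrt_mul_exp_half_sq (hf y hy).le]
  have hF_top : Tendsto F (𝓝[<] 1) atTop :=
    tendsto_integral_nhdsLT_atTop_of_not_integrableOn ha.2
      (hfc.mono (Ico_subset_Ioo_left ha.1)) (fun y hy => (hf y ⟨ha.1.trans hy.1, hy.2⟩).le)
      fun hfi => hfi.lintegral_lt_top.ne (hdiv a ha)
  have hI : ∫ s in x..1, C ^ 2 * (φ s ^ 2)⁻¹ = Real.exp (-F x) :=
    integral_eq_exp_neg_of_hasDerivAt_of_tendsto_atTop hx.2
      (fun y hy => hasDerivAt_integral_of_continuousOn_Ioo hfc ha ⟨hx.1.trans_le hy.1, hy.2⟩)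
      hF_top
      (fun y hy => by
        rw [hφ_sq y ⟨hx.1.trans hy.1, hy.2⟩, Real.exp_neg]
        field_simp)
      ((hint x hx).const_mul _)
  have hfirst : φ x ^ 2 * ∫ s in x..1, (φ s ^ 2)⁻¹ = 1 / f x := by
    have hI' : ∫ s in x..1, (φ s ^ 2)⁻¹ = Real.exp (-F x) / C ^ 2 := by
      rw [eq_div_iff (by positivity), mul_comm, ← intervalIntegral.integral_const_mul, hI]
    rw [hI', hφ_sq x hx, Real.exp_neg]
    field_simp
  exact ⟨hfirst, by rw [hψ x hx, ← mul_assoc, ← sq, hfirst, one_div, inv_inv]⟩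

/-- If `f > 0` is continuous with `∫ₐ¹ f = +∞`, and
`φ(x) = C·f(x)^{-1/2}·exp(½∫ₐˣ f)`, `ψ(x) = φ(x)·∫ₓ¹ φ(s)⁻² ds`, then
`φ(x)²·∫ₓ¹ φ(s)⁻² ds = 1/f(x)`, i.e. `1/(φ(x)ψ(x)) = f(x)`. -/
theorem stmt_12 (f : ℝ → ℝ)
    (hfc : ContinuousOn f (Set.Ioo 0 1))
    (hf : ∀ x ∈ Set.Ioo (0:ℝ) 1, 0 < f x)
    (a : ℝ) (ha : a ∈ Set.Ioo (0:ℝ) 1)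
    (hdiv : ∀ b ∈ Set.Ioo (0:ℝ) 1,
      ∫⁻ s in Set.Ioo b 1, ENNReal.ofReal (f s) = ⊤)
    (C : ℝ) (hC : 0 < C) (φ ψ : ℝ → ℝ)
    (hφ : ∀ x ∈ Set.Ioo (0:ℝ) 1,
      φ x = C * (Real.sqrt (f x))⁻¹ * Real.exp ((1/2) * ∫ s in a..x, f s))
    (hφpos : ∀ x ∈ Set.Ioo (0:ℝ) 1, 0 < φ x)
    (hint : ∀ x ∈ Set.Ioo (0:ℝ) 1,
      IntervalIntegrable (fun s => ((φ s) ^ 2)⁻¹) MeasureTheory.volume x 1)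
    (hψ : ∀ x ∈ Set.Ioo (0:ℝ) 1, ψ x = φ x * ∫ s in x..1, ((φ s) ^ 2)⁻¹) :
    ∀ x ∈ Set.Ioo (0:ℝ) 1,
      (φ x) ^ 2 * (∫ s in x..1, ((φ s) ^ 2)⁻¹) = 1 / f x ∧
      (φ x * ψ x)⁻¹ = f x :=
  stmt_12_general f hfc hf a ha hdiv C hC φ ψ hφ hint hψ
end

section
/- Let λ : (0,1) → (0,∞) satisfy λ(x) = 1/(φ(x)²·∫ₓ¹ φ(s)^{−2} ds), where φ is a positive C¹ function on (0,1) extending continuously to [0,1] with φ(0) = 0, φ'(0) = 1 and φ(1) > 0. Then for any a ∈ (0,1), the limits lim_{t→0⁺} λ(t)·exp(−∫ₜᵃ λ(s) ds) and lim_{t→1⁻} λ(t)·exp(−∫ₐᵗ λ(s) ds) exist, are finite, and are strictly positive; consequently ∫₀ᵃ λ(s) ds = +∞ and ∫ₐ¹ λ(s) ds = +∞. -/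
/-!
Writing `I(x) = ∫ₓ¹ φ⁻²`, we have `I' = -φ⁻²`, so `λ = φ⁻² / I = -(log I)'` and
`exp (-∫ₜᵘ λ) = I(u) / I(t)`. Both limits are then explicit: near `1` the quantity is
`1 / (φ(t)² I(a)) → 1 / (φ(1)² I(a))`, and near `0` it is `I(a) / (φ(t) I(t))²`, which tends to
`I(a)` because `φ(s) ~ s` forces `I(t) ~ 1/t`. The divergence of `∫ λ` at both ends is the
divergence of `log I`, since `I → ∞` at `0` and `I → 0` at `1`.
-/

open Set MeasureTheory intervalIntegral Filter Topology

theorem intervalIntegrable_inv_sq {t d : ℝ} (ht : 0 < t) (htd : t ≤ d) :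
    IntervalIntegrable (fun s : ℝ => (s ^ 2)⁻¹) volume t d :=
  intervalIntegrable_inv (fun x hx => pow_ne_zero 2
    (ht.trans_le (by rw [uIcc_of_le htd] at hx; exact hx.1)).ne') (by fun_prop)

theorem integral_inv_sq {t d : ℝ} (ht : 0 < t) (htd : t ≤ d) :
    ∫ s in t..d, (s ^ 2)⁻¹ = t⁻¹ - d⁻¹ := by
  have hderiv : ∀ x ∈ uIcc t d, HasDerivAt (fun s : ℝ => -s⁻¹) (x ^ 2)⁻¹ x := fun x hx => by
    rw [uIcc_of_le htd] at hx
    have h := (hasDerivAt_inv (ht.trans_le hx.1).ne').neg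
    rwa [neg_neg] at h
  rw [integral_eq_sub_of_hasDerivAt hderiv (intervalIntegrable_inv_sq ht htd)]
  ring

theorem abs_integral_sub_mul_inv_sq_le {g : ℝ → ℝ} {c ε t d : ℝ} (ht : 0 < t) (htd : t ≤ d)
    (hg : ∀ s ∈ Ioc t d, |s ^ 2 * g s - c| ≤ ε) :
    |∫ s in t..d, (g s - c * (s ^ 2)⁻¹)| ≤ ε * (t⁻¹ - d⁻¹) := by
  have hle : ∀ s ∈ Ioc t d, ‖g s - c * (s ^ 2)⁻¹‖ ≤ ε * (s ^ 2)⁻¹ := fun s hs => by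
    have hs0 : 0 < s := ht.trans hs.1
    have hgs : g s - c * (s ^ 2)⁻¹ = (s ^ 2 * g s - c) * (s ^ 2)⁻¹ := by field_simp
    rw [Real.norm_eq_abs, hgs, abs_mul, abs_of_pos (a := (s ^ 2)⁻¹) (by positivity)]
    exact mul_le_mul_of_nonneg_right (hg s hs) (by positivity)
  calc |∫ s in t..d, (g s - c * (s ^ 2)⁻¹)|
      ≤ ∫ s in t..d, ε * (s ^ 2)⁻¹ :=
        norm_integral_le_of_norm_le htd (ae_of_all _ hle)
          ((intervalIntegrable_inv_sq ht htd).const_mul ε)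
    _ = ε * (t⁻¹ - d⁻¹) := by
        rw [intervalIntegral.integral_const_mul, integral_inv_sq ht htd]

theorem tendsto_mul_integral_of_tendsto_sq_mul {g : ℝ → ℝ} {b c : ℝ} (hb : 0 < b)
    (hint : ∀ x ∈ Ioo 0 b, IntervalIntegrable g volume x b)
    (hg : Tendsto (fun s => s ^ 2 * g s) (𝓝[>] 0) (𝓝 c)) :
    Tendsto (fun t => t * ∫ s in t..b, g s) (𝓝[>] 0) (𝓝 c) := by
  refine Metric.tendsto_nhds.2 fun ε hε => ?_
  obtain ⟨d, hd0, hd⟩ := mem_nhdsGT_iff_exists_Ioc_subset.1 <|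
    (hg.eventually (Metric.closedBall_mem_nhds c (half_pos hε))).and (Ioo_mem_nhdsGT hb)
  have hdb : d < b := (hd ⟨hd0, le_rfl⟩).2.2
  set K := (∫ s in d..b, g s) - c / d
  have hsplit : ∀ t ∈ Ioo 0 d, t * (∫ s in t..b, g s) - c
      = t * (∫ s in t..d, (g s - c * (s ^ 2)⁻¹)) + t * K := fun t ht => by
    have hgi : IntervalIntegrable g volume t d :=
      (hint t ⟨ht.1, ht.2.trans hdb⟩).mono_set (uIcc_subset_uIcc_left (by
        rw [uIcc_of_le (ht.2.trans hdb).le]; exact ⟨ht.2.le, hdb.le⟩))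
    rw [← integral_add_adjacent_intervals hgi (hint d ⟨hd0, hdb⟩),
      integral_sub hgi ((intervalIntegrable_inv_sq ht.1 ht.2.le).const_mul c),
      intervalIntegral.integral_const_mul, integral_inv_sq ht.1 ht.2.le]
    simp only [K]
    linear_combination c * mul_inv_cancel₀ ht.1.ne'
  have hK : ∀ᶠ t in 𝓝[>] (0:ℝ), |t * K| < ε / 2 := by
    have : Tendsto (fun t => t * K) (𝓝 0) (𝓝 0) := by
      simpa using (continuous_mul_const K).tendsto 0
    exact eventually_nhdsWithin_of_eventually_nhds <| by
      simpa using this.eventually (Metric.ball_mem_nhds 0 (half_pos hε))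
  filter_upwards [Ioo_mem_nhdsGT hd0, hK] with t ht htK
  have hbound := abs_integral_sub_mul_inv_sq_le ht.1 ht.2.le fun s hs =>
    (Real.dist_eq _ _ ▸ (hd ⟨ht.1.trans hs.1, hs.2⟩).1 : |s ^ 2 * g s - c| ≤ ε / 2)
  rw [Real.dist_eq, hsplit t ht]
  calc |t * (∫ s in t..d, (g s - c * (s ^ 2)⁻¹)) + t * K|
      ≤ t * (ε / 2 * (t⁻¹ - d⁻¹)) + |t * K| := by
        grw [abs_add_le, abs_mul, abs_of_pos ht.1, hbound]
        exact ht.1.le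
    _ < ε := by
        have : 0 < t * d⁻¹ := mul_pos ht.1 (inv_pos.2 hd0)
        rw [mul_left_comm, mul_sub, mul_inv_cancel₀ ht.1.ne']
        nlinarith

theorem tendsto_div_self_nhdsGT_of_hasDerivWithinAt {f : ℝ → ℝ} {f' : ℝ} (hf0 : f 0 = 0)
    (hf : HasDerivWithinAt f f' (Ici 0) 0) :
    Tendsto (fun s => f s / s) (𝓝[>] 0) (𝓝 f') :=
  ((hasDerivWithinAt_iff_tendsto_slope' (lt_irrefl 0)).1 hf.Ioi_of_Ici).congr fun s => by
    simp [slope_def_field, hf0]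

theorem tendsto_mul_integral_inv_sq {f : ℝ → ℝ} {f' b : ℝ} (hf0 : f 0 = 0)
    (hf : HasDerivWithinAt f f' (Ici 0) 0) (hf' : f' ≠ 0) (hb : 0 < b)
    (hint : ∀ x ∈ Ioo 0 b, IntervalIntegrable (fun s => (f s ^ 2)⁻¹) volume x b) :
    Tendsto (fun t => t * ∫ s in t..b, (f s ^ 2)⁻¹) (𝓝[>] 0) (𝓝 (f' ^ 2)⁻¹) :=
  tendsto_mul_integral_of_tendsto_sq_mul hb hint <|
    (((tendsto_div_self_nhdsGT_of_hasDerivWithinAt hf0 hf).pow 2).inv₀ (pow_ne_zero 2 hf')).congr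
      fun s => by rw [div_pow, inv_div, div_eq_mul_inv]

theorem tendsto_apply_mul_integral_inv_sq {f : ℝ → ℝ} {f' b : ℝ} (hf0 : f 0 = 0)
    (hf : HasDerivWithinAt f f' (Ici 0) 0) (hf' : f' ≠ 0) (hb : 0 < b)
    (hint : ∀ x ∈ Ioo 0 b, IntervalIntegrable (fun s => (f s ^ 2)⁻¹) volume x b) :
    Tendsto (fun t => f t * ∫ s in t..b, (f s ^ 2)⁻¹) (𝓝[>] 0) (𝓝 f'⁻¹) := by
  have h := (tendsto_div_self_nhdsGT_of_hasDerivWithinAt hf0 hf).mul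
    (tendsto_mul_integral_inv_sq hf0 hf hf' hb hint)
  rw [show f' * (f' ^ 2)⁻¹ = f'⁻¹ by field_simp] at h
  refine h.congr' ?_
  filter_upwards [self_mem_nhdsWithin] with t (ht : 0 < t)
  field_simp

theorem tendsto_integral_inv_sq_atTop {f : ℝ → ℝ} {f' b : ℝ} (hf0 : f 0 = 0)
    (hf : HasDerivWithinAt f f' (Ici 0) 0) (hf' : f' ≠ 0) (hb : 0 < b)
    (hint : ∀ x ∈ Ioo 0 b, IntervalIntegrable (fun s => (f s ^ 2)⁻¹) volume x b) :
    Tendsto (fun t => ∫ s in t..b, (f s ^ 2)⁻¹) (𝓝[>] 0) atTop := by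
  refine ((tendsto_mul_integral_inv_sq hf0 hf hf' hb hint).pos_mul_atTop (by positivity)
    tendsto_inv_nhdsGT_zero).congr' ?_
  filter_upwards [self_mem_nhdsWithin] with t (ht : 0 < t)
  field_simp

theorem ENNReal.eq_top_of_tendsto_atTop_of_ofReal_le {α : Type*} {l : Filter α} [l.NeBot]
    {F : α → ℝ} {x : ENNReal} (hF : Tendsto F l atTop)
    (h : ∀ᶠ t in l, ENNReal.ofReal (F t) ≤ x) : x = ⊤ :=
  ENNReal.eq_top_of_forall_nnreal_le fun r => by
    obtain ⟨t, hxt, hrt⟩ := (h.and (hF.eventually_ge_atTop r)).exists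
    exact (ENNReal.ofReal_coe_nnreal ▸ ENNReal.ofReal_le_ofReal hrt).trans hxt

theorem ofReal_intervalIntegral_le_setLIntegral {f : ℝ → ℝ} {t u : ℝ} {S : Set ℝ}
    (htu : t ≤ u) (hf : IntervalIntegrable f volume t u) (hnn : ∀ x ∈ Ioo t u, 0 ≤ f x)
    (hS : Ioo t u ⊆ S) :
    ENNReal.ofReal (∫ x in t..u, f x) ≤ ∫⁻ x in S, ENNReal.ofReal (f x) := by
  rw [integral_of_le htu, integral_Ioc_eq_integral_Ioo,
    ofReal_integral_eq_lintegral_ofReal (hf.1.mono_set Ioo_subset_Ioc_self)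
      ((ae_restrict_iff' measurableSet_Ioo).2 (ae_of_all _ hnn))]
  exact lintegral_mono_set hS

section TailIntegral

variable {g : ℝ → ℝ} {p q : ℝ}

theorem integral_pos_of_mem_Ioo (hgpos : ∀ x ∈ Ioo p q, 0 < g x)
    (hint : ∀ x ∈ Ioo p q, IntervalIntegrable g volume x q) {x : ℝ} (hx : x ∈ Ioo p q) :
    0 < ∫ s in x..q, g s :=
  intervalIntegral_pos_of_pos_on (hint x hx) (fun s hs => hgpos s ⟨hx.1.trans hs.1, hs.2⟩) hx.2

theorem div_integral_pos (hgpos : ∀ x ∈ Ioo p q, 0 < g x)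
    (hint : ∀ x ∈ Ioo p q, IntervalIntegrable g volume x q) {x : ℝ} (hx : x ∈ Ioo p q) :
    0 < g x / ∫ s in x..q, g s :=
  div_pos (hgpos x hx) (integral_pos_of_mem_Ioo hgpos hint hx)

theorem hasDerivAt_integral_of_mem_Ioo (hg : ContinuousOn g (Ioo p q))
    (hint : ∀ x ∈ Ioo p q, IntervalIntegrable g volume x q) {x : ℝ} (hx : x ∈ Ioo p q) :
    HasDerivAt (fun y => ∫ s in y..q, g s) (-g x) x :=
  integral_hasDerivAt_left (hint x hx) (hg.stronglyMeasurableAtFilter isOpen_Ioo x hx)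
    (hg.continuousAt (isOpen_Ioo.mem_nhds hx))

theorem continuousOn_div_integral (hg : ContinuousOn g (Ioo p q))
    (hgpos : ∀ x ∈ Ioo p q, 0 < g x)
    (hint : ∀ x ∈ Ioo p q, IntervalIntegrable g volume x q) :
    ContinuousOn (fun x => g x / ∫ s in x..q, g s) (Ioo p q) :=
  hg.div (fun _ hx => (hasDerivAt_integral_of_mem_Ioo hg hint hx).continuousAt.continuousWithinAt)
    fun _ hx => (integral_pos_of_mem_Ioo hgpos hint hx).ne'

theorem integral_div_integral_eq_log_sub (hg : ContinuousOn g (Ioo p q))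
    (hgpos : ∀ x ∈ Ioo p q, 0 < g x)
    (hint : ∀ x ∈ Ioo p q, IntervalIntegrable g volume x q) {t u : ℝ}
    (ht : t ∈ Ioo p q) (hu : u ∈ Ioo p q) :
    ∫ x in t..u, g x / ∫ s in x..q, g s =
      Real.log (∫ s in t..q, g s) - Real.log (∫ s in u..q, g s) := by
  have hsub : uIcc t u ⊆ Ioo p q := ordConnected_Ioo.uIcc_subset ht hu
  have hderiv : ∀ x ∈ uIcc t u, HasDerivAt (fun y => -Real.log (∫ s in y..q, g s))
      (g x / ∫ s in x..q, g s) x := fun x hx => by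
    have h := ((hasDerivAt_integral_of_mem_Ioo hg hint (hsub hx)).log
      (integral_pos_of_mem_Ioo hgpos hint (hsub hx)).ne').neg
    rwa [neg_div, neg_neg] at h
  rw [integral_eq_sub_of_hasDerivAt hderiv
    ((continuousOn_div_integral hg hgpos hint).mono hsub).intervalIntegrable]
  ring

theorem exp_neg_integral_div_integral (hg : ContinuousOn g (Ioo p q))
    (hgpos : ∀ x ∈ Ioo p q, 0 < g x)
    (hint : ∀ x ∈ Ioo p q, IntervalIntegrable g volume x q) {t u : ℝ}
    (ht : t ∈ Ioo p q) (hu : u ∈ Ioo p q) :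
    Real.exp (-∫ x in t..u, g x / ∫ s in x..q, g s) =
      (∫ s in u..q, g s) / ∫ s in t..q, g s := by
  rw [integral_div_integral_eq_log_sub hg hgpos hint ht hu, neg_sub, Real.exp_sub,
    Real.exp_log (integral_pos_of_mem_Ioo hgpos hint hu),
    Real.exp_log (integral_pos_of_mem_Ioo hgpos hint ht)]

theorem setLIntegral_Ioo_div_integral_eq_top_left (hg : ContinuousOn g (Ioo p q))
    (hgpos : ∀ x ∈ Ioo p q, 0 < g x)
    (hint : ∀ x ∈ Ioo p q, IntervalIntegrable g volume x q)
    (hlim : Tendsto (fun t => ∫ s in t..q, g s) (𝓝[>] p) atTop) {a : ℝ} (ha : a ∈ Ioo p q) :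
    ∫⁻ x in Ioo p a, ENNReal.ofReal (g x / ∫ s in x..q, g s) = ⊤ := by
  have hlog : Tendsto (fun t => Real.log (∫ s in t..q, g s) - Real.log (∫ s in a..q, g s))
      (𝓝[>] p) atTop :=
    tendsto_atTop_add_const_right _ _ (Real.tendsto_log_atTop.comp hlim)
  refine ENNReal.eq_top_of_tendsto_atTop_of_ofReal_le
    (F := fun t => ∫ x in t..a, g x / ∫ s in x..q, g s) (hlog.congr' ?_) ?_
  all_goals filter_upwards [Ioo_mem_nhdsGT ha.1] with t ht
  · exact (integral_div_integral_eq_log_sub hg hgpos hint ⟨ht.1, ht.2.trans ha.2⟩ ha).symm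
  · exact ofReal_intervalIntegral_le_setLIntegral ht.2.le
      ((continuousOn_div_integral hg hgpos hint).mono
        (ordConnected_Ioo.uIcc_subset ⟨ht.1, ht.2.trans ha.2⟩ ha)).intervalIntegrable
      (fun x hx => (div_integral_pos hgpos hint (Ioo_subset_Ioo ht.1.le ha.2.le hx)).le)
      (Ioo_subset_Ioo_left ht.1.le)

theorem setLIntegral_Ioo_div_integral_eq_top_right (hg : ContinuousOn g (Ioo p q))
    (hgpos : ∀ x ∈ Ioo p q, 0 < g x)
    (hint : ∀ x ∈ Ioo p q, IntervalIntegrable g volume x q) {a : ℝ} (ha : a ∈ Ioo p q) :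
    ∫⁻ x in Ioo a q, ENNReal.ofReal (g x / ∫ s in x..q, g s) = ⊤ := by
  have hzero : Tendsto (fun t => ∫ s in t..q, g s) (𝓝[<] q) (𝓝[>] 0) := by
    have hcont := continuousOn_primitive_interval_left
      ((intervalIntegrable_iff' (μ := volume)).1 (hint a ha)) q right_mem_uIcc
    rw [uIcc_of_le ha.2.le] at hcont
    refine tendsto_nhdsWithin_iff.2 ⟨?_, ?_⟩
    · rw [← nhdsWithin_Ioo_eq_nhdsLT ha.2, ← integral_same (f := g) (a := q)]
      exact hcont.mono Ioo_subset_Icc_self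
    · filter_upwards [Ioo_mem_nhdsLT ha.2] with t ht
      exact integral_pos_of_mem_Ioo hgpos hint ⟨ha.1.trans ht.1, ht.2⟩
  have hlog : Tendsto (fun t => Real.log (∫ s in a..q, g s) - Real.log (∫ s in t..q, g s))
      (𝓝[<] q) atTop :=
    tendsto_atTop_add_const_left _ _
      (tendsto_neg_atBot_atTop.comp (Real.tendsto_log_nhdsGT_zero.comp hzero))
  refine ENNReal.eq_top_of_tendsto_atTop_of_ofReal_le
    (F := fun t => ∫ x in a..t, g x / ∫ s in x..q, g s) (hlog.congr' ?_) ?_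
  all_goals filter_upwards [Ioo_mem_nhdsLT ha.2] with t ht
  · exact (integral_div_integral_eq_log_sub hg hgpos hint ha ⟨ha.1.trans ht.1, ht.2⟩).symm
  · exact ofReal_intervalIntegral_le_setLIntegral ht.1.le
      ((continuousOn_div_integral hg hgpos hint).mono
        (ordConnected_Ioo.uIcc_subset ha ⟨ha.1.trans ht.1, ht.2⟩)).intervalIntegrable
      (fun x hx => (div_integral_pos hgpos hint (Ioo_subset_Ioo ha.1.le ht.2.le hx)).le)
      (Ioo_subset_Ioo_right ht.2.le)

end TailIntegral

theorem stmt_14_general (φ lam : ℝ → ℝ)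
    (hφc : ContinuousOn φ (Set.Icc 0 1))
    (hφpos : ∀ x ∈ Set.Ioo (0:ℝ) 1, 0 < φ x)
    (hφ0 : φ 0 = 0)
    (hφ'0 : HasDerivWithinAt φ 1 (Set.Ici 0) 0)
    (hφ1 : 0 < φ 1)
    (hint : ∀ x ∈ Set.Ioo (0:ℝ) 1,
      IntervalIntegrable (fun s => ((φ s) ^ 2)⁻¹) MeasureTheory.volume x 1)
    (hlam : ∀ x ∈ Set.Ioo (0:ℝ) 1,
      lam x = ((φ x) ^ 2 * ∫ s in x..1, ((φ s) ^ 2)⁻¹)⁻¹) :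
    ∀ a ∈ Set.Ioo (0:ℝ) 1,
      (∃ L > (0:ℝ), Filter.Tendsto (fun t => lam t * Real.exp (-∫ s in t..a, lam s))
        (nhdsWithin 0 (Set.Ioi 0)) (nhds L)) ∧
      (∃ L > (0:ℝ), Filter.Tendsto (fun t => lam t * Real.exp (-∫ s in a..t, lam s))
        (nhdsWithin 1 (Set.Iio 1)) (nhds L)) ∧
      (∫⁻ s in Set.Ioo (0:ℝ) a, ENNReal.ofReal (lam s) = ⊤) ∧
      (∫⁻ s in Set.Ioo a 1, ENNReal.ofReal (lam s) = ⊤) := by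
  intro a ha
  set g : ℝ → ℝ := fun s => ((φ s) ^ 2)⁻¹
  set I : ℝ → ℝ := fun x => ∫ s in x..1, g s
  have hgc : ContinuousOn g (Ioo 0 1) :=
    ((hφc.mono Ioo_subset_Icc_self).pow 2).inv₀ fun x hx => pow_ne_zero 2 (hφpos x hx).ne'
  have hgpos : ∀ x ∈ Ioo (0:ℝ) 1, 0 < g x := fun x hx => by have := hφpos x hx; positivity
  have hI : ∀ x ∈ Ioo (0:ℝ) 1, 0 < I x := fun x hx => integral_pos_of_mem_Ioo hgpos hint hx
  have hlam' : EqOn lam (fun x => g x / I x) (Ioo 0 1) := fun x hx => by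
    rw [hlam x hx, mul_inv]
    exact (div_eq_mul_inv _ _).symm
  have hexp : ∀ t ∈ Ioo (0:ℝ) 1, ∀ u ∈ Ioo (0:ℝ) 1,
      Real.exp (-∫ s in t..u, lam s) = I u / I t := fun t ht u hu => by
    rw [integral_congr (hlam'.mono (ordConnected_Ioo.uIcc_subset ht hu))]
    exact exp_neg_integral_div_integral hgc hgpos hint ht hu
  have hφI : Tendsto (fun t => φ t * I t) (𝓝[>] 0) (𝓝 1) := by
    simpa using tendsto_apply_mul_integral_inv_sq hφ0 hφ'0 one_ne_zero one_pos hint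
  refine ⟨⟨I a, hI a ha, ?_⟩, ⟨((φ 1) ^ 2 * I a)⁻¹, by have := hI a ha; positivity, ?_⟩, ?_, ?_⟩
  · refine (by simpa using ((hφI.pow 2).inv₀ (by norm_num)).const_mul (I a) :
      Tendsto (fun t => I a * ((φ t * I t) ^ 2)⁻¹) _ _).congr' ?_
    filter_upwards [Ioo_mem_nhdsGT one_pos] with t ht
    rw [hexp t ht a ha, hlam' ht]
    simp only [g]
    field_simp
  · have hφ1' : Tendsto φ (𝓝[<] 1) (𝓝 (φ 1)) := (continuousWithinAt_Ioo_iff_Iio zero_lt_one).1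
      ((hφc 1 ⟨zero_le_one, le_rfl⟩).mono Ioo_subset_Icc_self)
    refine (((hφ1'.pow 2).mul_const (I a)).inv₀ (by have := hI a ha; positivity)).congr' ?_
    filter_upwards [Ioo_mem_nhdsLT one_pos] with t ht
    have := hI t ht
    rw [hexp a ha t ht, hlam' ht]
    simp only [g]
    field_simp
  · rw [setLIntegral_congr_fun measurableSet_Ioo fun x hx =>
      congrArg ENNReal.ofReal (hlam' (Ioo_subset_Ioo_right ha.2.le hx))]
    exact setLIntegral_Ioo_div_integral_eq_top_left hgc hgpos hint
      (tendsto_integral_inv_sq_atTop hφ0 hφ'0 one_ne_zero one_pos hint) ha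
  · rw [setLIntegral_congr_fun measurableSet_Ioo fun x hx =>
      congrArg ENNReal.ofReal (hlam' (Ioo_subset_Ioo_left ha.1.le hx))]
    exact setLIntegral_Ioo_div_integral_eq_top_right hgc hgpos hint ha

/-- For the eigenvalue function `λ(x) = 1/(φ(x)²·∫ₓ¹ φ(s)⁻² ds)`, with `φ` a
positive `C¹` function on `(0,1)` extending continuously to `[0,1]` with
`φ(0) = 0`, `φ'(0) = 1` (right derivative) and `φ(1) > 0`: for any `a ∈ (0,1)`
the limits `lim_{t→0⁺} λ(t)·exp(-∫ₜᵃ λ)` and `lim_{t→1⁻} λ(t)·exp(-∫ₐᵗ λ)`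
exist, are finite and strictly positive; consequently
`∫₀ᵃ λ = +∞` and `∫ₐ¹ λ = +∞`. -/
theorem stmt_14 (φ φ' lam : ℝ → ℝ)
    (hφc : ContinuousOn φ (Set.Icc 0 1))
    (hφpos : ∀ x ∈ Set.Ioo (0:ℝ) 1, 0 < φ x)
    (hφ' : ∀ x ∈ Set.Ioo (0:ℝ) 1, HasDerivAt φ (φ' x) x)
    (hφ'c : ContinuousOn φ' (Set.Ioo 0 1))
    (hφ0 : φ 0 = 0)
    (hφ'0 : HasDerivWithinAt φ 1 (Set.Ici 0) 0)
    (hφ1 : 0 < φ 1)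
    (hint : ∀ x ∈ Set.Ioo (0:ℝ) 1,
      IntervalIntegrable (fun s => ((φ s) ^ 2)⁻¹) MeasureTheory.volume x 1)
    (hlam : ∀ x ∈ Set.Ioo (0:ℝ) 1,
      lam x = ((φ x) ^ 2 * ∫ s in x..1, ((φ s) ^ 2)⁻¹)⁻¹)
    (hlampos : ∀ x ∈ Set.Ioo (0:ℝ) 1, 0 < lam x) :
    ∀ a ∈ Set.Ioo (0:ℝ) 1,
      (∃ L > (0:ℝ), Filter.Tendsto (fun t => lam t * Real.exp (-∫ s in t..a, lam s))
        (nhdsWithin 0 (Set.Ioi 0)) (nhds L)) ∧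
      (∃ L > (0:ℝ), Filter.Tendsto (fun t => lam t * Real.exp (-∫ s in a..t, lam s))
        (nhdsWithin 1 (Set.Iio 1)) (nhds L)) ∧
      (∫⁻ s in Set.Ioo (0:ℝ) a, ENNReal.ofReal (lam s) = ⊤) ∧
      (∫⁻ s in Set.Ioo a 1, ENNReal.ofReal (lam s) = ⊤) :=
  stmt_14_general φ lam hφc hφpos hφ0 hφ'0 hφ1 hint hlam
end

section
/- Consider the zero-potential problem −y'' = λ·Σᵢ mᵢ δ(x−tᵢ) y on [0,1] with y(0) = y(1) = 0, masses mᵢ > 0 and 0 < t₁ < ⋯ < tₙ < 1. With fundamental solutions φ(x) = x, ψ(x) = 1−x of y'' = 0, the discriminants satisfy D(η,ξ) = η − ξ for all 0 ≤ ξ < η ≤ 1; hence both hypotheses (H₀) (D(1,0) ≠ 0) and (H) (D(t_{i+1},t_i) ≠ 0 for all i) hold automatically, and the problem has exactly n distinct nonzero real Dirichlet eigenvalues. -/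
/-!
A piecewise-linear eigenfunction is determined by its node values `v i = y (t i)`
(`v 0 = v (n + 1) = 0`), and the jump conditions say exactly that `A v = λ M v`, where `A` is the
tridiagonal stiffness matrix of the spacings `t (i + 1) - t i` and `M = diagonal m`. Hence the
eigenvalues are those of the real symmetric matrix `X = M^{-1/2} A M^{-1/2}`. They are simple: the
off-diagonal entries `-1 / (t (i + 1) - t i)` of `A` do not vanish, so a solution of the three-term
recurrence is determined by its first entry and every eigenspace of `X` is a line. So `X` has `n`
distinct eigenvalues. Finally `0` is not one of them: `A v = 0` makes all slopes equal, and
`v 0 = v (n + 1)` forces the common slope to vanish.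
-/

open Set

/-- `l` is a Dirichlet eigenvalue of the zero-potential problem
`-y'' = l·Σᵢ mᵢ δ(x-tᵢ) y`, `y(0)=y(1)=0`: there is a nontrivial continuous
function `y` on `[0,1]`, linear on each `[tᵢ, tᵢ₊₁]` with slope `s i`, with
jump conditions `s(i-1) - s(i) = l·mᵢ·y(tᵢ)` and `y(0)=y(1)=0`. -/
def PLEigen (n : ℕ) (m t : ℕ → ℝ) (l : ℝ) : Prop :=
  ∃ (y : ℝ → ℝ) (s : ℕ → ℝ),
    ContinuousOn y (Set.Icc 0 1) ∧
    (∀ i ≤ n, ∀ x ∈ Set.Icc (t i) (t (i+1)), y x = y (t i) + s i * (x - t i)) ∧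
    (∀ i, 1 ≤ i → i ≤ n → s (i-1) - s i = l * m i * y (t i)) ∧
    y 0 = 0 ∧ y 1 = 0 ∧
    (∃ x ∈ Set.Icc (0:ℝ) 1, y x ≠ 0)

open Matrix

namespace Matrix.IsHermitian

variable {ι : Type*} [Fintype ι] [DecidableEq ι] {X : Matrix ι ι ℝ}

/-- Two orthonormal eigenvectors for one eigenvalue have a combination killed by `φ`; pairing it
with the first one shows that `φ` kills the second. -/
theorem eigenvalues_injective_of_linearMap (hX : X.IsHermitian) (φ : (ι → ℝ) →ₗ[ℝ] ℝ)
    (hφ : ∀ (μ : ℝ) w, X *ᵥ w = μ • w → φ w = 0 → w = 0) : Function.Injective hX.eigenvalues := by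
  intro i j hij
  by_contra hne
  set b := hX.eigenvectorBasis
  have hdot : ∀ k l, ⇑(b l) ⬝ᵥ ⇑(b k) = if k = l then 1 else 0 := fun k l => by
    simpa [EuclideanSpace.inner_eq_star_dotProduct] using orthonormal_iff_ite.1 b.orthonormal k l
  set u : ι → ℝ := ⇑(b i)
  set v : ι → ℝ := ⇑(b j)
  have hu : X *ᵥ u = hX.eigenvalues i • u := hX.mulVec_eigenvectorBasis i
  have hv : X *ᵥ v = hX.eigenvalues i • v := hij ▸ hX.mulVec_eigenvectorBasis j
  have hcomb : φ u • v - φ v • u = 0 :=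
    hφ (hX.eigenvalues i) _ (by rw [mulVec_sub, mulVec_smul, mulVec_smul, hu, hv]; module)
      (by rw [map_sub, map_smul, map_smul, smul_eq_mul, smul_eq_mul, mul_comm, sub_self])
  have hvu : v ⬝ᵥ u = 0 := (hdot i j).trans (if_neg hne)
  have huu : u ⬝ᵥ u = 1 := (hdot i i).trans (if_pos rfl)
  have hφv : φ v = 0 := by
    simpa [sub_dotProduct, smul_dotProduct, hvu, huu] using congrArg (· ⬝ᵥ u) hcomb
  exact b.orthonormal.ne_zero j (WithLp.ofLp_injective 2 (hφ _ v hv hφv))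

theorem mem_range_eigenvalues_iff (hX : X.IsHermitian) {l : ℝ} :
    l ∈ Set.range hX.eigenvalues ↔ ∃ w ≠ 0, X *ᵥ w = l • w := by
  rw [← hX.spectrum_real_eq_range_eigenvalues, ← spectrum_toLin',
    ← Module.End.hasEigenvalue_iff_mem_spectrum]
  constructor
  · intro h
    obtain ⟨w, hw⟩ := h.exists_hasEigenvector
    exact ⟨w, hw.2, Module.End.mem_eigenspace_iff.1 hw.1⟩
  · rintro ⟨w, hw, hXw⟩
    exact Module.End.hasEigenvalue_of_hasEigenvector ⟨Module.End.mem_eigenspace_iff.2 hXw, hw⟩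

end Matrix.IsHermitian

section Symmetrize

variable {ι : Type*} [Fintype ι] [DecidableEq ι]

/-- `M^{-1/2} A M^{-1/2}` for the diagonal mass matrix `M = diagonal m`. -/
noncomputable def symmetrize (A : Matrix ι ι ℝ) (m : ι → ℝ) : Matrix ι ι ℝ :=
  diagonal (fun k => (√(m k))⁻¹) * A * diagonal (fun k => (√(m k))⁻¹)

theorem Matrix.IsHermitian.symmetrize {A : Matrix ι ι ℝ} (hA : A.IsHermitian) (m : ι → ℝ) :
    (symmetrize A m).IsHermitian := by
  simpa [_root_.symmetrize] using
    isHermitian_conjTranspose_mul_mul (diagonal fun k => (√(m k))⁻¹) hA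

theorem symmetrize_mulVec_eq_smul_iff (A : Matrix ι ι ℝ) {m : ι → ℝ} (hm : ∀ k, 0 < m k)
    (l : ℝ) (w : ι → ℝ) :
    symmetrize A m *ᵥ w = l • w ↔
      A *ᵥ ((fun k => (√(m k))⁻¹) * w) = l • (m * ((fun k => (√(m k))⁻¹) * w)) := by
  have hu : diagonal (fun k => (√(m k))⁻¹) *ᵥ w = (fun k => (√(m k))⁻¹) * w := by
    ext k; rw [mulVec_diagonal, Pi.mul_apply]
  simp only [_root_.symmetrize, ← mulVec_mulVec, hu, funext_iff, mulVec_diagonal,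
    Pi.smul_apply, smul_eq_mul, Pi.mul_apply]
  refine forall_congr' fun k => ?_
  have hk := (Real.sqrt_pos.2 (hm k)).ne'
  have hs := Real.mul_self_sqrt (hm k).le
  generalize (A *ᵥ ((fun k => (√(m k))⁻¹) * w)) k = a
  constructor <;> intro h
  · field_simp at h ⊢
    linear_combination √(m k) * h + l * w k * hs
  · field_simp at h ⊢
    exact mul_right_cancel₀ hk (by linear_combination h - l * w k * hs)

end Symmetrize

section Jacobi

variable {n : ℕ}

/-- Node `k + 1` carries `w k`; every other node, in particular the boundary nodes `0` and
`n + 1`, carries `0`. -/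
noncomputable def nodeExt : (Fin n → ℝ) →ₗ[ℝ] ℕ → ℝ :=
  Function.ExtendByZero.linearMap ℝ fun k : Fin n => (k : ℕ) + 1

theorem nodeExt_succ (w : Fin n → ℝ) (k : Fin n) : nodeExt w (k + 1) = w k := by
  have hinj : Function.Injective fun k : Fin n => (k : ℕ) + 1 :=
    fun _ _ h => Fin.ext (Nat.succ_injective h)
  exact hinj.extend_apply w 0 k

theorem nodeExt_eq_zero {w : Fin n → ℝ} {i : ℕ} (h : i = 0 ∨ n < i) : nodeExt w i = 0 := by
  rw [nodeExt, Function.ExtendByZero.linearMap_apply, Function.extend_apply']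
  · rfl
  · rintro ⟨k, rfl⟩
    omega

theorem nodeExt_mul (c w : Fin n → ℝ) : nodeExt (c * w) = nodeExt c * nodeExt w := by
  have h := Function.extend_mul (fun k : Fin n => (k : ℕ) + 1) c w 0 0
  rwa [mul_zero] at h

theorem sum_ite_succ_eq_nodeExt (w : Fin n → ℝ) (c : ℝ) (i : ℕ) :
    ∑ k : Fin n, (if (k : ℕ) + 1 = i then c * w k else 0) = c * nodeExt w i := by
  by_cases h : ∃ k : Fin n, (k : ℕ) + 1 = i
  · obtain ⟨k, rfl⟩ := h
    rw [nodeExt_succ, Finset.sum_eq_single k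
      (fun k' _ hk' => if_neg fun h => hk' (Fin.ext (by omega))) (by simp), if_pos rfl]
  · have h' : i = 0 ∨ n < i := by
      by_contra! h''
      exact h ⟨⟨i - 1, by omega⟩, by simp; omega⟩
    rw [Finset.sum_eq_zero fun k _ => if_neg fun hk => h ⟨k, hk⟩, nodeExt_eq_zero h', mul_zero]

/-- Row and column `j` belong to node `j + 1`: the diagonal entry at node `p` is `a p`, and `b p`
couples the nodes `p` and `p + 1`. -/
def jacobi (a b : ℕ → ℝ) : Matrix (Fin n) (Fin n) ℝ :=
  of fun j k => if (k : ℕ) = j then a (j + 1) else if (k : ℕ) + 1 = j then b j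
    else if (j : ℕ) + 1 = k then b k else 0

theorem jacobi_isHermitian (a b : ℕ → ℝ) : (jacobi a b : Matrix (Fin n) (Fin n) ℝ).IsHermitian := by
  ext j k
  simp only [conjTranspose_apply, jacobi, of_apply, star_trivial]
  split_ifs <;> first | omega | (congr 1 <;> omega)

theorem jacobi_mulVec_apply (a b : ℕ → ℝ) (w : Fin n → ℝ) (j : Fin n) :
    (jacobi a b *ᵥ w) j = b j * nodeExt w j + a (j + 1) * nodeExt w (j + 1)
      + b (j + 1) * nodeExt w (j + 2) := by
  simp only [← sum_ite_succ_eq_nodeExt, ← Finset.sum_add_distrib, mulVec, dotProduct]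
  refine Finset.sum_congr rfl fun k _ => ?_
  simp only [jacobi, of_apply]
  split_ifs <;> first | omega | ring1 | (rw [zero_add, zero_add]; congr 2; omega)

/-- Row `r` expresses the entry at node `r + 2` through those at nodes `r` and `r + 1`. -/
theorem jacobi_eq_zero_of_mulVec {a b : ℕ → ℝ} (hb : ∀ p, 1 ≤ p → p < n → b p ≠ 0)
    {c u : Fin n → ℝ} (hu : jacobi a b *ᵥ u = c * u) (h1 : nodeExt u 1 = 0) : u = 0 := by
  have key : ∀ i, nodeExt u i = 0 ∧ nodeExt u (i + 1) = 0 := by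
    intro i
    induction i with
    | zero => exact ⟨nodeExt_eq_zero (Or.inl rfl), h1⟩
    | succ r ih =>
      refine ⟨ih.2, ?_⟩
      rcases lt_or_ge (r + 1) n with hr | hr
      · have hrow := congrFun hu ⟨r, by omega⟩
        rw [jacobi_mulVec_apply, Pi.mul_apply, ← nodeExt_succ u ⟨r, _⟩] at hrow
        simp only [ih.1, ih.2, mul_zero, zero_add, add_zero] at hrow
        exact (mul_eq_zero.1 hrow).resolve_left (hb (r + 1) (by omega) hr)
      · exact nodeExt_eq_zero (Or.inr (by omega))
  funext k
  simpa only [nodeExt_succ, Pi.zero_apply] using (key k).2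

end Jacobi

noncomputable def divDiff (t v : ℕ → ℝ) (i : ℕ) : ℝ := (v (i + 1) - v i) / (t (i + 1) - t i)

section Stiffness

variable {n : ℕ} {t : ℕ → ℝ}

variable (n t) in
/-- The paper's `A`, with `a_{kk} = (t_{k+1} - t_{k-1}) / ((t_{k+1} - t_k) (t_k - t_{k-1}))`
split into `1 / (t_k - t_{k-1}) + 1 / (t_{k+1} - t_k)`. -/
noncomputable def stiffness : Matrix (Fin n) (Fin n) ℝ :=
  jacobi (fun p => 1 / (t p - t (p - 1)) + 1 / (t (p + 1) - t p)) fun p => -1 / (t (p + 1) - t p)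

theorem stiffness_mulVec_apply (u : Fin n → ℝ) (j : Fin n) :
    (stiffness n t *ᵥ u) j = divDiff t (nodeExt u) j - divDiff t (nodeExt u) (j + 1) := by
  rw [stiffness, jacobi_mulVec_apply]
  simp only [divDiff, Nat.add_sub_cancel]
  ring

theorem stiffness_mulVec_eq_smul_iff (m : ℕ → ℝ) (l : ℝ) (u : Fin n → ℝ) :
    stiffness n t *ᵥ u = l • ((fun k : Fin n => m (k + 1)) * u) ↔
      ∀ p, 1 ≤ p → p ≤ n → divDiff t (nodeExt u) (p - 1) - divDiff t (nodeExt u) p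
        = l * m p * nodeExt u p := by
  simp only [funext_iff, stiffness_mulVec_apply, Pi.smul_apply, Pi.mul_apply, smul_eq_mul]
  constructor
  · intro h p hp1 hpn
    obtain ⟨j, rfl⟩ : ∃ j, p = j + 1 := ⟨p - 1, by omega⟩
    rw [Nat.add_sub_cancel, h ⟨j, hpn⟩, nodeExt_succ _ ⟨j, hpn⟩, mul_assoc]
  · intro h j
    rw [← nodeExt_succ u j, ← mul_assoc, ← h (j + 1) (by omega) j.isLt, Nat.add_sub_cancel]

theorem stiffness_eq_zero_of_mulVec {u c : Fin n → ℝ} (ht : ∀ i ≤ n, t i < t (i + 1))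
    (hu : stiffness n t *ᵥ u = c * u) (h1 : nodeExt u 1 = 0) : u = 0 :=
  jacobi_eq_zero_of_mulVec (fun p _ hp => div_ne_zero (by norm_num)
    (sub_ne_zero.2 (ht p hp.le).ne')) hu h1

theorem stiffness_mulVec_eq_zero {u : Fin n → ℝ} (ht : ∀ i ≤ n, t i < t (i + 1))
    (hu : stiffness n t *ᵥ u = 0) : u = 0 := by
  have hv0 : nodeExt u 0 = 0 := nodeExt_eq_zero (Or.inl rfl)
  have hconst : ∀ i ≤ n, divDiff t (nodeExt u) i = divDiff t (nodeExt u) 0 := by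
    intro i hi
    induction i with
    | zero => rfl
    | succ r ih =>
      have := congrFun hu ⟨r, hi⟩
      rw [stiffness_mulVec_apply, Pi.zero_apply, sub_eq_zero] at this
      rw [← this, ih (by omega)]
  -- telescoping `nodeExt u (n + 1) - nodeExt u 0 = 0` against the constant slope
  have hc : divDiff t (nodeExt u) 0 * ∑ i ∈ Finset.range (n + 1), (t (i + 1) - t i) = 0 := by
    have hsum := Finset.sum_range_sub (nodeExt u) (n + 1)
    rw [nodeExt_eq_zero (Or.inr (by omega : n < n + 1)), hv0, sub_zero] at hsum
    rw [Finset.mul_sum, ← hsum]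
    refine Finset.sum_congr rfl fun i hi => ?_
    have hi : i ≤ n := Nat.lt_succ_iff.1 (Finset.mem_range.1 hi)
    rw [← hconst i hi, divDiff, div_mul_cancel₀ _ (sub_ne_zero.2 (ht i hi).ne')]
  have hslope : divDiff t (nodeExt u) 0 = 0 := (mul_eq_zero.1 hc).resolve_right
    (Finset.sum_pos (fun i hi => sub_pos.2 (ht i (Nat.lt_succ_iff.1 (Finset.mem_range.1 hi))))
      Finset.nonempty_range_add_one).ne'
  refine stiffness_eq_zero_of_mulVec ht (c := 0) (by rw [hu, zero_mul]) ?_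
  rw [divDiff, div_eq_zero_iff, hv0, sub_zero, zero_add] at hslope
  exact hslope.resolve_right (sub_ne_zero.2 (ht 0 n.zero_le).ne')

end Stiffness

section PiecewiseLinear

variable {n : ℕ} {t : ℕ → ℝ}

theorem le_of_forall_lt_succ (ht : ∀ i ≤ n, t i < t (i + 1)) {i j : ℕ} (hij : i ≤ j)
    (hj : j ≤ n + 1) : t i ≤ t j :=
  (strictMonoOn_Iic_of_lt_succ fun k hk => ht k (Nat.lt_succ_iff.1 hk)).monotoneOn
    (Set.mem_Iic.2 (hij.trans hj)) (Set.mem_Iic.2 hj) hij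

theorem exists_mem_Icc_succ {x : ℝ} (k : ℕ) (hx : x ∈ Set.Icc (t 0) (t (k + 1))) :
    ∃ i ≤ k, x ∈ Set.Icc (t i) (t (i + 1)) := by
  induction k with
  | zero => exact ⟨0, le_rfl, hx⟩
  | succ r ih =>
    rcases le_or_gt x (t (r + 1)) with h | h
    · obtain ⟨i, hi, hxi⟩ := ih ⟨hx.1, h⟩
      exact ⟨i, by omega, hxi⟩
    · exact ⟨r + 1, le_rfl, h.le, hx.2⟩

variable (n t) in
/-- Clamping `x` to `[t i, t (i + 1)]` makes the `i`-th summand the increment of the piecewise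
linear interpolant of the node values `v` over that part of `[t 0, x]`. -/
noncomputable def interpolant (v : ℕ → ℝ) (x : ℝ) : ℝ :=
  v 0 + ∑ i ∈ Finset.range (n + 1), divDiff t v i * (min (max x (t i)) (t (i + 1)) - t i)

theorem continuous_interpolant (v : ℕ → ℝ) : Continuous (interpolant n t v) := by
  unfold interpolant
  fun_prop

theorem interpolant_eq (ht : ∀ i ≤ n, t i < t (i + 1)) (v : ℕ → ℝ) {k : ℕ} (hk : k ≤ n)
    {x : ℝ} (hx : x ∈ Set.Icc (t k) (t (k + 1))) :
    interpolant n t v x = v k + divDiff t v k * (x - t k) := by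
  rw [interpolant, show n + 1 = k + 1 + (n - k) by omega, Finset.sum_range_add,
    Finset.sum_range_succ]
  have hleft : ∑ i ∈ Finset.range k, divDiff t v i * (min (max x (t i)) (t (i + 1)) - t i)
      = v k - v 0 := by
    rw [← Finset.sum_range_sub]
    refine Finset.sum_congr rfl fun i hi => ?_
    have hi := Finset.mem_range.1 hi
    have hle : t (i + 1) ≤ x := (le_of_forall_lt_succ ht (by omega) (by omega)).trans hx.1
    rw [max_eq_left ((ht i (by omega)).le.trans hle), min_eq_right hle, divDiff,
      div_mul_cancel₀ _ (sub_ne_zero.2 (ht i (by omega)).ne')]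
  have hright : ∑ i ∈ Finset.range (n - k), divDiff t v (k + 1 + i)
      * (min (max x (t (k + 1 + i))) (t (k + 1 + i + 1)) - t (k + 1 + i)) = 0 := by
    refine Finset.sum_eq_zero fun i hi => ?_
    have hi := Finset.mem_range.1 hi
    have hge : x ≤ t (k + 1 + i) := hx.2.trans (le_of_forall_lt_succ ht (by omega) (by omega))
    rw [max_eq_right hge, min_eq_left (ht _ (by omega)).le, sub_self, mul_zero]
  rw [hleft, hright, max_eq_left hx.1, min_eq_left hx.2]
  ring

theorem interpolant_node (ht : ∀ i ≤ n, t i < t (i + 1)) (v : ℕ → ℝ) {k : ℕ}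
    (hk : k ≤ n + 1) : interpolant n t v (t k) = v k := by
  rcases Nat.lt_or_ge k (n + 1) with hk' | hk'
  · rw [interpolant_eq ht v (Nat.lt_succ_iff.1 hk') ⟨le_rfl, (ht k (by omega)).le⟩]
    ring
  · obtain rfl : k = n + 1 := by omega
    rw [interpolant_eq ht v le_rfl ⟨(ht n le_rfl).le, le_rfl⟩, divDiff,
      div_mul_cancel₀ _ (sub_ne_zero.2 (ht n le_rfl).ne')]
    ring

end PiecewiseLinear

section Eigenproblem

variable {n : ℕ} {m t : ℕ → ℝ} {l : ℝ}

theorem nodeExt_restrict {v : ℕ → ℝ} (h0 : v 0 = 0) (hn : v (n + 1) = 0) {i : ℕ}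
    (hi : i ≤ n + 1) : nodeExt (fun k : Fin n => v (k + 1)) i = v i := by
  rcases i with _ | k
  · rw [nodeExt_eq_zero (Or.inl rfl), h0]
  · rcases Nat.lt_or_ge k n with hk | hk
    · exact nodeExt_succ _ ⟨k, hk⟩
    · obtain rfl : k = n := by omega
      rw [nodeExt_eq_zero (Or.inr (by omega)), hn]

theorem exists_stiffness_eigenvector_of_PLEigen (ht0 : t 0 = 0) (ht1 : t (n + 1) = 1)
    (ht : ∀ i ≤ n, t i < t (i + 1)) (h : PLEigen n m t l) :
    ∃ u : Fin n → ℝ, u ≠ 0 ∧ stiffness n t *ᵥ u = l • ((fun k : Fin n => m (k + 1)) * u) := by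
  obtain ⟨y, s, -, hlin, hjump, hy0, hy1, x, hx, hyx⟩ := h
  have hv : ∀ i ≤ n + 1, nodeExt (fun k : Fin n => y (t (k + 1))) i = y (t i) :=
    fun i => nodeExt_restrict (v := fun i => y (t i)) (by rw [ht0, hy0]) (by rw [ht1, hy1])
  have hs : ∀ i ≤ n, s i = divDiff t (fun i => y (t i)) i := by
    intro i hi
    rw [divDiff, eq_div_iff (sub_ne_zero.2 (ht i hi).ne'),
      hlin i hi (t (i + 1)) ⟨(ht i hi).le, le_rfl⟩]
    ring
  refine ⟨fun k => y (t (k + 1)), fun hu => hyx ?_, ?_⟩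
  · have hzero : ∀ i ≤ n + 1, y (t i) = 0 := fun i hi => by rw [← hv i hi, hu, map_zero]; rfl
    obtain ⟨k, hk, hxk⟩ := exists_mem_Icc_succ n (ht0 ▸ ht1 ▸ hx)
    rw [hlin k hk x hxk, hs k hk, divDiff, hzero k (by omega), hzero (k + 1) (by omega)]
    ring
  · rw [stiffness_mulVec_eq_smul_iff]
    intro p hp1 hpn
    have hdd : ∀ i ≤ n, divDiff t (nodeExt fun k : Fin n => y (t (k + 1))) i = s i := fun i hi => by
      rw [hs i hi, divDiff, divDiff, hv i (by omega), hv (i + 1) (by omega)]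
    rw [hdd (p - 1) (by omega), hdd p hpn, hjump p hp1 hpn, hv p (by omega)]

theorem PLEigen_of_stiffness_eigenvector (ht0 : t 0 = 0) (ht1 : t (n + 1) = 1)
    (ht : ∀ i ≤ n, t i < t (i + 1)) {u : Fin n → ℝ} (hu : u ≠ 0)
    (h : stiffness n t *ᵥ u = l • ((fun k : Fin n => m (k + 1)) * u)) : PLEigen n m t l := by
  have hnode : ∀ {k}, k ≤ n + 1 → interpolant n t (nodeExt u) (t k) = nodeExt u k :=
    interpolant_node ht _
  obtain ⟨k, hk⟩ := Function.ne_iff.1 hu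
  refine ⟨interpolant n t (nodeExt u), divDiff t (nodeExt u),
    (continuous_interpolant _).continuousOn, fun i hi x hx => ?_, fun i hi1 hin => ?_, ?_, ?_,
    t (k + 1), ⟨?_, ?_⟩, ?_⟩
  · rw [interpolant_eq ht _ hi hx, hnode (by omega)]
  · rw [(stiffness_mulVec_eq_smul_iff m l u).1 h i hi1 hin, hnode (by omega)]
  · have h0 := hnode (k := 0) (by omega)
    rwa [ht0, nodeExt_eq_zero (Or.inl rfl)] at h0
  · rw [← ht1, hnode le_rfl, nodeExt_eq_zero (Or.inr (by omega))]
  · exact ht0 ▸ le_of_forall_lt_succ ht (by omega) (by omega)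
  · exact ht1 ▸ le_of_forall_lt_succ ht (by omega) le_rfl
  · rwa [hnode (by omega), nodeExt_succ]

theorem PLEigen_iff_exists_stiffness_eigenvector (ht0 : t 0 = 0) (ht1 : t (n + 1) = 1)
    (ht : ∀ i ≤ n, t i < t (i + 1)) :
    PLEigen n m t l ↔
      ∃ u : Fin n → ℝ, u ≠ 0 ∧ stiffness n t *ᵥ u = l • ((fun k : Fin n => m (k + 1)) * u) :=
  ⟨exists_stiffness_eigenvector_of_PLEigen ht0 ht1 ht,
    fun ⟨_, hu, h⟩ => PLEigen_of_stiffness_eigenvector ht0 ht1 ht hu h⟩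

end Eigenproblem

section Spectrum

variable {n : ℕ} {t : ℕ → ℝ} {M : Fin n → ℝ}

variable (n t) in
theorem stiffness_isHermitian : (stiffness n t).IsHermitian := jacobi_isHermitian _ _

theorem exists_symmetrize_mulVec_eq_smul_iff (A : Matrix (Fin n) (Fin n) ℝ) (hM : ∀ k, 0 < M k)
    (l : ℝ) : (∃ w ≠ 0, symmetrize A M *ᵥ w = l • w) ↔ ∃ u ≠ 0, A *ᵥ u = l • (M * u) := by
  have hs : ∀ k, √(M k) ≠ 0 := fun k => (Real.sqrt_pos.2 (hM k)).ne'
  constructor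
  · rintro ⟨w, hw, h⟩
    refine ⟨_, fun h0 => hw ?_, (symmetrize_mulVec_eq_smul_iff A hM l w).1 h⟩
    ext k
    simpa [hs k] using congrFun h0 k
  · rintro ⟨u, hu, h⟩
    refine ⟨fun k => √(M k) * u k, fun h0 => hu ?_, (symmetrize_mulVec_eq_smul_iff A hM l _).2 ?_⟩
    · ext k
      simpa [hs k] using congrFun h0 k
    · convert h using 3 <;> ext k <;> simp only [Pi.mul_apply] <;> field_simp [hs k]

theorem eq_zero_of_symmetrize_stiffness_mulVec (hM : ∀ k, 0 < M k) (ht : ∀ i ≤ n, t i < t (i + 1))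
    {μ : ℝ} {w : Fin n → ℝ} (hw : symmetrize (stiffness n t) M *ᵥ w = μ • w)
    (h1 : nodeExt w 1 = 0) : w = 0 := by
  rw [symmetrize_mulVec_eq_smul_iff _ hM, ← smul_mul_assoc] at hw
  have h := stiffness_eq_zero_of_mulVec ht hw (by rw [nodeExt_mul, Pi.mul_apply, h1, mul_zero])
  ext k
  simpa [(Real.sqrt_pos.2 (hM k)).ne'] using congrFun h k

theorem injective_eigenvalues_symmetrize_stiffness (hM : ∀ k, 0 < M k)
    (ht : ∀ i ≤ n, t i < t (i + 1)) :
    Function.Injective ((stiffness_isHermitian n t).symmetrize M).eigenvalues :=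
  ((stiffness_isHermitian n t).symmetrize M).eigenvalues_injective_of_linearMap
    (LinearMap.proj 1 ∘ₗ nodeExt) fun _ _ hw h1 => eq_zero_of_symmetrize_stiffness_mulVec hM ht hw h1

end Spectrum

theorem stmt_15_general (n : ℕ) (m t : ℕ → ℝ)
    (hm : ∀ i, 1 ≤ i → i ≤ n → 0 < m i)
    (ht0 : t 0 = 0) (ht1 : t (n+1) = 1)
    (htmono : ∀ i ≤ n, t i < t (i+1)) :
    (∀ ξ η : ℝ, η * (1 - ξ) - (1 - η) * ξ = η - ξ) ∧
    ((1:ℝ) - 0 ≠ 0) ∧ (∀ i ≤ n, t (i+1) - t i ≠ 0) ∧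
    ∃ S : Finset ℝ, S.card = n ∧ (0:ℝ) ∉ S ∧
      ∀ l : ℝ, (PLEigen n m t l ↔ l ∈ S) := by
  have hM : ∀ k : Fin n, 0 < m (k + 1) := fun k => hm _ (Nat.succ_pos _) k.isLt
  have hX := (stiffness_isHermitian n t).symmetrize fun k : Fin n => m (k + 1)
  have hspec : ∀ l, l ∈ Finset.univ.image hX.eigenvalues ↔
      ∃ u ≠ 0, stiffness n t *ᵥ u = l • ((fun k : Fin n => m (k + 1)) * u) := fun l => by
    rw [mem_image_univ_iff_mem_range, hX.mem_range_eigenvalues_iff,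
      exists_symmetrize_mulVec_eq_smul_iff _ hM]
  refine ⟨fun ξ η => by ring, by norm_num, fun i hi => sub_ne_zero.2 (htmono i hi).ne',
    Finset.univ.image hX.eigenvalues, ?_, fun h0 => ?_, fun l => ?_⟩
  · rw [Finset.card_image_of_injective _ (injective_eigenvalues_symmetrize_stiffness hM htmono),
      Finset.card_univ, Fintype.card_fin]
  · obtain ⟨u, hu, h⟩ := (hspec 0).1 h0
    exact hu (stiffness_mulVec_eq_zero htmono (by rw [h, zero_smul]))
  · rw [hspec, PLEigen_iff_exists_stiffness_eigenvector ht0 ht1 htmono]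

/-- For the zero-potential problem with fundamental solutions `φ(x) = x`,
`ψ(x) = 1-x`, the discriminants satisfy `D(η,ξ) = η-ξ` (so hypotheses (H₀)
and (H) hold automatically), and the problem has exactly `n` distinct nonzero
real Dirichlet eigenvalues. -/
theorem stmt_15 (n : ℕ) (hn : 1 ≤ n) (m t : ℕ → ℝ)
    (hm : ∀ i, 1 ≤ i → i ≤ n → 0 < m i)
    (ht0 : t 0 = 0) (ht1 : t (n+1) = 1)
    (htmono : ∀ i ≤ n, t i < t (i+1)) :
    (∀ ξ η : ℝ, η * (1 - ξ) - (1 - η) * ξ = η - ξ) ∧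
    ((1:ℝ) - 0 ≠ 0) ∧ (∀ i ≤ n, t (i+1) - t i ≠ 0) ∧
    ∃ S : Finset ℝ, S.card = n ∧ (0:ℝ) ∉ S ∧
      ∀ l : ℝ, (PLEigen n m t l ↔ l ∈ S) :=
  stmt_15_general n m t hm ht0 ht1 htmono
end

section
/- For the problem −y''(x) − (9π²/4)y(x) = λ·δ(x − 2/3)·y(x) on [0,1] with y(0) = y(1) = 0, the characteristic polynomial is constant and nonzero (p(λ) ≡ −2/(3π)); hence the set of Dirichlet eigenvalues is empty. -/
/-!
Away from the point mass, `y'' = -K²y` with `K = 3π/2`, so on each side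
`K y(x) = K y(a) cos K(x - a) + y'(a) sin K(x - a)`. From `y(0) = 0` the solution
vanishes again at `2/3` because `K · 2/3 = π`; the jump `y'(2/3⁻) - y'(2/3⁺) = λ y(2/3)` is
then blind to `λ`, so `y'` is continuous there, and since `K · 1/3 = π/2` the condition
`y(1) = 0` forces `y'(0) = 0`, i.e. `y ≡ 0`. The same zero `φ(2/3) = 0` makes the
characteristic polynomial constant.
-/

open Set MeasureTheory intervalIntegral Real

theorem hasDerivWithinAt_of_eq_add_integral {E : Type*} [NormedAddCommGroup E]
    [NormedSpace ℝ E] [CompleteSpace E] {f g : ℝ → E} {a b : ℝ} (hf : ContinuousOn f (Icc a b))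
    (hg : ∀ x ∈ Icc a b, g x = g a + ∫ s in a..x, f s) :
    ∀ x ∈ Icc a b, HasDerivWithinAt g (f x) (Icc a b) x := by
  intro x hx
  have hint : IntervalIntegrable f volume a x :=
    (hf.mono (by rw [uIcc_of_le hx.1]; exact Icc_subset_Icc_right hx.2)).intervalIntegrable
  have : Fact (x ∈ Icc a b) := ⟨hx⟩
  have hF := (integral_hasDerivWithinAt_right (s := Icc a b) hint
    (hf.stronglyMeasurableAtFilter_nhdsWithin measurableSet_Icc x) (hf x hx)).const_add (g a)
  exact hF.congr hg (hg x hx)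

theorem constant_of_hasDerivWithinAt_Icc_zero {E : Type*} [NormedAddCommGroup E]
    [NormedSpace ℝ E] {f : ℝ → E} {a b : ℝ}
    (hf : ∀ x ∈ Icc a b, HasDerivWithinAt f 0 (Icc a b) x) : ∀ x ∈ Icc a b, f x = f a :=
  constant_of_has_deriv_right_zero (fun x hx => (hf x hx).continuousWithinAt)
    fun x hx => (hf x (Ico_subset_Icc_self hx)).mono_of_mem_nhdsWithin (Icc_mem_nhdsGE_of_mem hx)

theorem hasDerivAt_ccos_mul_sub (K a : ℂ) (x : ℝ) :
    HasDerivAt (fun x : ℝ => Complex.cos (K * (x - a))) (-K * Complex.sin (K * (x - a))) x := by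
  convert (((hasDerivAt_id' (x : ℂ)).sub_const a).const_mul K).ccos.comp_ofReal using 1
  ring

theorem hasDerivAt_csin_mul_sub (K a : ℂ) (x : ℝ) :
    HasDerivAt (fun x : ℝ => Complex.sin (K * (x - a))) (K * Complex.cos (K * (x - a))) x := by
  convert (((hasDerivAt_id' (x : ℂ)).sub_const a).const_mul K).csin.comp_ofReal using 1
  ring

open Complex in
theorem oscillator_eq_cos_sin {K : ℂ} {a b : ℝ} {y g : ℝ → ℂ}
    (hy : ∀ x ∈ Icc a b, HasDerivWithinAt y (g x) (Icc a b) x)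
    (hg : ∀ x ∈ Icc a b, g x = g a + ∫ s in a..x, -K ^ 2 * y s) (x : ℝ) (hx : x ∈ Icc a b) :
    K * y x = K * y a * cos (K * (x - a)) + g a * sin (K * (x - a)) ∧
      g x = g a * cos (K * (x - a)) - K * y a * sin (K * (x - a)) := by
  have hg' := hasDerivWithinAt_of_eq_add_integral (f := fun s => -K ^ 2 * y s)
    (continuousOn_const.mul fun x hx => (hy x hx).continuousWithinAt) hg
  -- Rotating `(K y, g)` back by the angle `K (x - a)` gives a conserved pair.
  have hP : ∀ x ∈ Icc a b,
      HasDerivWithinAt (fun x => K * y x * cos (K * (x - a)) - g x * sin (K * (x - a))) 0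
        (Icc a b) x := by
    intro x hx
    exact ((((hy x hx).const_mul K).mul (hasDerivAt_ccos_mul_sub K a x).hasDerivWithinAt).sub
      ((hg' x hx).mul (hasDerivAt_csin_mul_sub K a x).hasDerivWithinAt)).congr_deriv (by ring)
  have hQ : ∀ x ∈ Icc a b,
      HasDerivWithinAt (fun x => g x * cos (K * (x - a)) + K * y x * sin (K * (x - a))) 0
        (Icc a b) x := by
    intro x hx
    exact (((hg' x hx).mul (hasDerivAt_ccos_mul_sub K a x).hasDerivWithinAt).add
      (((hy x hx).const_mul K).mul (hasDerivAt_csin_mul_sub K a x).hasDerivWithinAt)).congr_deriv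
      (by ring)
  have hPx := constant_of_hasDerivWithinAt_Icc_zero hP x hx
  have hQx := constant_of_hasDerivWithinAt_Icc_zero hQ x hx
  simp only [sub_self, mul_zero, Complex.cos_zero, Complex.sin_zero, mul_one, sub_zero, add_zero]
    at hPx hQx
  have hCS := sin_sq_add_cos_sq (K * (x - a))
  constructor
  · linear_combination cos (K * (x - a)) * hPx + sin (K * (x - a)) * hQx - K * y x * hCS
  · linear_combination cos (K * (x - a)) * hQx - sin (K * (x - a)) * hPx - g x * hCS

theorem oscillator_eq_zero_of_eq_zero {K : ℂ} {a b : ℝ} {y g : ℝ → ℂ} (hK : K ≠ 0)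
    (hy : ∀ x ∈ Icc a b, HasDerivWithinAt y (g x) (Icc a b) x)
    (hg : ∀ x ∈ Icc a b, g x = g a + ∫ s in a..x, -K ^ 2 * y s) (hya : y a = 0) (hga : g a = 0)
    (x : ℝ) (hx : x ∈ Icc a b) : y x = 0 := by
  have h := (oscillator_eq_cos_sin hy hg x hx).1
  rw [hya, hga] at h
  simpa [hK] using h

theorem not_diracEigen_two_thirds (l : ℂ) :
    ¬ DiracEigen (fun _ => -(9 * π ^ 2 / 4)) (2/3) l := by
  rintro ⟨y, g₁, g₂, -, hy₁, hg₁, hy₂, hg₂, hjump, hy0, hy1, x₀, hx₀, hyx₀⟩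
  set K : ℂ := 3 * π / 2
  have hK : K ≠ 0 := by simp [K, Real.pi_ne_zero]
  have hq : ((-(9 * π ^ 2 / 4) : ℝ) : ℂ) = -K ^ 2 := by push_cast; ring
  simp only [hq] at hg₁ hg₂
  obtain ⟨hyt, hg₁t⟩ := oscillator_eq_cos_sin hy₁ hg₁ (2/3) ⟨by norm_num, le_rfl⟩
  rw [show K * (((2/3 : ℝ) : ℂ) - ((0 : ℝ) : ℂ)) = π by push_cast; ring, Complex.sin_pi,
    Complex.cos_pi, hy0] at hyt hg₁t
  have hyt' : y (2/3) = 0 := by simpa [hK] using hyt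
  have hg₂t : g₂ (2/3) = -g₁ 0 := by
    rw [hyt', mul_zero, sub_eq_zero] at hjump
    rw [← hjump, hg₁t]
    ring
  obtain ⟨hKy1, -⟩ := oscillator_eq_cos_sin hy₂ hg₂ 1 ⟨by norm_num, le_rfl⟩
  rw [show K * (((1 : ℝ) : ℂ) - ((2/3 : ℝ) : ℂ)) = π / 2 by push_cast; ring,
    Complex.sin_pi_div_two, Complex.cos_pi_div_two, hy1, hyt', hg₂t] at hKy1
  have hg₁0 : g₁ 0 = 0 := by linear_combination hKy1
  apply hyx₀
  rcases le_total x₀ (2/3) with h | h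
  · exact oscillator_eq_zero_of_eq_zero hK hy₁ hg₁ hy0 hg₁0 x₀ ⟨hx₀.1, h⟩
  · exact oscillator_eq_zero_of_eq_zero hK hy₂ hg₂ hyt' (by rw [hg₂t, hg₁0, neg_zero]) x₀
      ⟨h, hx₀.2⟩

theorem stmt_16_general (φ ψ : ℝ → ℝ) (ω : ℝ)
    (hφ : ∀ x, φ x = (2 / (3 * π)) * Real.sin (3 * π * x / 2)) :
    (∀ l : ℝ,
      (1 + (l / ω) * (φ (2/3) * ψ (2/3))) * φ 1 + (-(l / ω) * (φ (2/3)) ^ 2) * ψ 1 =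
        -(2 / (3 * π))) ∧
    (∀ l : ℂ, ¬ DiracEigen (fun _ => -(9 * π ^ 2 / 4)) (2/3) l) := by
  refine ⟨fun l => ?_, not_diracEigen_two_thirds⟩
  rw [hφ, hφ, show 3 * π * (2/3 : ℝ) / 2 = π by ring, show 3 * π * (1 : ℝ) / 2 = π / 2 + π by ring,
    Real.sin_pi, Real.sin_add_pi, Real.sin_pi_div_two]
  ring

/-- For `-y'' - (9π²/4)y = l·δ(x - 2/3)·y`, `y(0)=y(1)=0`, the characteristic
polynomial is the nonzero constant `-2/(3π)`, and the set of Dirichlet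
eigenvalues is empty.  Here `φ(x) = (2/(3π))sin(3πx/2)`,
`ψ(x) = -(2/(3π))cos(3πx/2)` and `ω = 2/(3π)`. -/
theorem stmt_16 (φ ψ : ℝ → ℝ) (ω : ℝ)
    (hφ : ∀ x, φ x = (2 / (3 * π)) * Real.sin (3 * π * x / 2))
    (hψ : ∀ x, ψ x = -(2 / (3 * π)) * Real.cos (3 * π * x / 2))
    (hω : ω = 2 / (3 * π)) :
    (∀ l : ℝ,
      (1 + (l / ω) * (φ (2/3) * ψ (2/3))) * φ 1 + (-(l / ω) * (φ (2/3)) ^ 2) * ψ 1 =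
        -(2 / (3 * π))) ∧
    (∀ l : ℂ, ¬ DiracEigen (fun _ => -(9 * π ^ 2 / 4)) (2/3) l) :=
  stmt_16_general φ ψ ω hφ
end

section
/- Suppose λ is a non-real Dirichlet eigenvalue of the problem −y'' + q y = λ·Σᵢ₌₁ⁿ mᵢ δ(x−tᵢ) y, y(0)=y(1)=0, with real q ∈ L¹[0,1] and mᵢ > 0, and E is a corresponding eigenfunction. Then E(tᵢ) = 0 for all i = 0, 1, …, n+1 (where t₀ = 0, t_{n+1} = 1). -/
open Set MeasureTheory intervalIntegral

open Complex in

lemma green_identity (a b : ℝ) (hab : a < b) (q : ℝ → ℝ) (E gg : ℝ → ℂ)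
    (hq : MeasureTheory.IntegrableOn q (Set.Icc a b))
    (hEc : ContinuousOn E (Set.Icc a b))
    (hEd : ∀ x ∈ Set.Icc a b, HasDerivWithinAt E (gg x) (Set.Icc a b) x)
    (hode : ∀ x ∈ Set.Icc a b, gg x = gg a + ∫ s in a..x, (q s : ℂ) * E s) :
    (gg b * (starRingEnd ℂ) (E b)).im = (gg a * (starRingEnd ℂ) (E a)).im := by
  set h : ℝ → ℂ := fun s => (q s : ℂ) * E s with hh
  set w : ℝ → ℂ := fun s => (starRingEnd ℂ) (gg s) with hw
  have haIcc : a ∈ Set.Icc a b := ⟨le_rfl, hab.le⟩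
  have hbIcc : b ∈ Set.Icc a b := ⟨hab.le, le_rfl⟩
  -- integrability of h
  have hInt : MeasureTheory.IntegrableOn h (Set.Icc a b) := by
    have h1 : MeasureTheory.IntegrableOn (fun s => ((q s : ℝ) : ℂ)) (Set.Icc a b) :=
      hq.ofReal
    exact h1.mul_continuousOn hEc isCompact_Icc
  have hIntIoc : MeasureTheory.IntegrableOn h (Set.Ioc a b) :=
    hInt.mono_set Set.Ioc_subset_Icc_self
  have ih : IntervalIntegrable h volume a b := by
    rw [intervalIntegrable_iff_integrableOn_Ioc_of_le hab.le]; exact hIntIoc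
  -- continuity of gg
  have hgc : ContinuousOn gg (Set.Icc a b) := by
    have hprim : ContinuousOn (fun x => ∫ s in a..x, h s) (Set.Icc a b) := by
      have := intervalIntegral.continuousOn_primitive_interval
        (f := h) (a := a) (b := b) (μ := volume) (by rwa [Set.uIcc_of_le hab.le])
      rwa [Set.uIcc_of_le hab.le] at this
    exact (continuousOn_const.add hprim).congr (fun x hx => hode x hx)
  have hwc : ContinuousOn w (Set.Icc a b) := Complex.continuous_conj.comp_continuousOn hgc
  -- FTC for E
  have hftc : ∀ x ∈ Set.Icc a b, (∫ s in x..b, gg s) = E b - E x := by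
    intro x hx
    apply intervalIntegral.integral_eq_sub_of_hasDeriv_right
    · rw [Set.uIcc_of_le hx.2]
      exact hEc.mono (Set.Icc_subset_Icc hx.1 le_rfl)
    · rw [min_eq_left hx.2, max_eq_right hx.2]
      intro y hy
      have hy' : y ∈ Set.Icc a b := ⟨(hx.1.trans_lt hy.1).le, hy.2.le⟩
      exact ((hEd y hy').hasDerivAt
        (Icc_mem_nhds (hx.1.trans_lt hy.1) hy.2)).hasDerivWithinAt
    · apply ContinuousOn.intervalIntegrable
      rw [Set.uIcc_of_le hx.2]
      exact hgc.mono (Set.Icc_subset_Icc hx.1 le_rfl)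
  -- conj of interval integral
  have conj_int : ∀ (c d : ℝ) (f : ℝ → ℂ),
      (∫ s in c..d, (starRingEnd ℂ) (f s)) = (starRingEnd ℂ) (∫ s in c..d, f s) := by
    intro c d f
    simp only [intervalIntegral, _root_.integral_conj, map_sub]
  have hwint : ∀ x ∈ Set.Icc a b,
      (∫ s in x..b, w s) = (starRingEnd ℂ) (E b) - (starRingEnd ℂ) (E x) := by
    intro x hx
    simp only [hw]
    rw [conj_int, hftc x hx, map_sub]
  -- Fubini
  have measS : MeasurableSet {p : ℝ × ℝ | p.1 < p.2} :=
    (isOpen_lt continuous_fst continuous_snd).measurableSet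
  set μ := volume.restrict (Set.Ioc a b) with hμ
  have hwIoc : MeasureTheory.IntegrableOn w (Set.Ioc a b) :=
    (hwc.integrableOn_compact isCompact_Icc).mono_set Set.Ioc_subset_Icc_self
  have hF : MeasureTheory.Integrable
      (fun p : ℝ × ℝ => ({p : ℝ × ℝ | p.1 < p.2}).indicator (fun p => h p.1 * w p.2) p)
      (μ.prod μ) :=
    (hIntIoc.mul_prod hwIoc).indicator measS
  have swap := MeasureTheory.integral_integral_swap
    (f := fun x s => ({p : ℝ × ℝ | p.1 < p.2}).indicator (fun p => h p.1 * w p.2) (x, s))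
    (μ := μ) (ν := μ) hF
  have L1 : ∀ x ∈ Set.Ioc a b,
      (∫ s, ({p : ℝ × ℝ | p.1 < p.2}).indicator (fun p => h p.1 * w p.2) (x, s) ∂μ)
        = h x * ∫ s in x..b, w s := by
    intro x hx
    have e1 : ∀ s, ({p : ℝ × ℝ | p.1 < p.2}).indicator (fun p => h p.1 * w p.2) (x, s)
        = (Set.Ioi x).indicator (fun s => h x * w s) s := by
      intro s
      by_cases hs : x < s <;> simp [Set.indicator_apply, hs]
    simp only [e1]
    rw [MeasureTheory.integral_indicator measurableSet_Ioi, hμ,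
      Measure.restrict_restrict measurableSet_Ioi]
    have : Set.Ioi x ∩ Set.Ioc a b = Set.Ioc x b := by
      ext s; simp only [Set.mem_inter_iff, Set.mem_Ioi, Set.mem_Ioc]
      constructor
      · rintro ⟨h1, _, h3⟩; exact ⟨h1, h3⟩
      · rintro ⟨h1, h2⟩; exact ⟨h1, hx.1.trans h1, h2⟩
    rw [this, MeasureTheory.integral_const_mul, intervalIntegral.integral_of_le hx.2]
  have R1 : ∀ s ∈ Set.Ioc a b,
      (∫ x, ({p : ℝ × ℝ | p.1 < p.2}).indicator (fun p => h p.1 * w p.2) (x, s) ∂μ)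
        = (∫ x in a..s, h x) * w s := by
    intro s hs
    have e1 : ∀ x, ({p : ℝ × ℝ | p.1 < p.2}).indicator (fun p => h p.1 * w p.2) (x, s)
        = (Set.Iio s).indicator (fun x => h x * w s) x := by
      intro x
      by_cases hx : x < s <;> simp [Set.indicator_apply, hx]
    simp only [e1]
    rw [MeasureTheory.integral_indicator measurableSet_Iio, hμ,
      Measure.restrict_restrict measurableSet_Iio]
    have : Set.Iio s ∩ Set.Ioc a b = Set.Ioo a s := by
      ext x; simp only [Set.mem_inter_iff, Set.mem_Iio, Set.mem_Ioc, Set.mem_Ioo]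
      constructor
      · rintro ⟨h1, h2, _⟩; exact ⟨h2, h1⟩
      · rintro ⟨h1, h2⟩; exact ⟨h2, h1, (h2.le.trans hs.2)⟩
    rw [this, MeasureTheory.integral_mul_const, intervalIntegral.integral_of_le hs.1.le,
      MeasureTheory.integral_Ioc_eq_integral_Ioo]
  have key : (∫ x in a..b, h x * ∫ s in x..b, w s)
      = ∫ s in a..b, (∫ x in a..s, h x) * w s := by
    rw [intervalIntegral.integral_of_le hab.le, intervalIntegral.integral_of_le hab.le]
    calc (∫ x in Set.Ioc a b, h x * ∫ s in x..b, w s)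
        = ∫ x, (∫ s, ({p : ℝ × ℝ | p.1 < p.2}).indicator
            (fun p => h p.1 * w p.2) (x, s) ∂μ) ∂μ := by
          rw [hμ]
          exact (MeasureTheory.setIntegral_congr_fun measurableSet_Ioc
            (fun x hx => (L1 x hx).symm))
      _ = ∫ s, (∫ x, ({p : ℝ × ℝ | p.1 < p.2}).indicator
            (fun p => h p.1 * w p.2) (x, s) ∂μ) ∂μ := swap
      _ = ∫ s in Set.Ioc a b, (∫ x in a..s, h x) * w s := by
          rw [hμ]
          exact MeasureTheory.setIntegral_congr_fun measurableSet_Ioc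
            (fun s hs => R1 s hs)
  -- main identity
  have hGc : ContinuousOn (fun x => ∫ s in a..x, h s) (Set.Icc a b) := by
    have := intervalIntegral.continuousOn_primitive_interval
      (f := h) (a := a) (b := b) (μ := volume) (by rwa [Set.uIcc_of_le hab.le])
    rwa [Set.uIcc_of_le hab.le] at this
  have i1 : IntervalIntegrable (fun s => gg a * w s) volume a b := by
    apply ContinuousOn.intervalIntegrable
    rw [Set.uIcc_of_le hab.le]
    exact continuousOn_const.mul hwc
  have i2 : IntervalIntegrable (fun s => (∫ x in a..s, h x) * w s) volume a b := by
    apply ContinuousOn.intervalIntegrable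
    rw [Set.uIcc_of_le hab.le]
    exact hGc.mul hwc
  have i3 : IntervalIntegrable (fun x => h x * (starRingEnd ℂ) (E b)) volume a b :=
    ih.mul_const _
  have i4 : IntervalIntegrable (fun x => h x * (starRingEnd ℂ) (E x)) volume a b := by
    rw [intervalIntegrable_iff_integrableOn_Ioc_of_le hab.le]
    exact (hInt.mul_continuousOn (Complex.continuous_conj.comp_continuousOn hEc)
      isCompact_Icc).mono_set Set.Ioc_subset_Icc_self
  have EQ : (∫ s in a..b, gg s * w s)
      = gg a * ((starRingEnd ℂ) (E b) - (starRingEnd ℂ) (E a))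
        + (∫ s in a..b, h s) * (starRingEnd ℂ) (E b)
        - ∫ s in a..b, h s * (starRingEnd ℂ) (E s) := by
    have step1 : (∫ s in a..b, gg s * w s)
        = ∫ s in a..b, (gg a * w s + (∫ x in a..s, h x) * w s) := by
      rw [intervalIntegral.integral_of_le hab.le, intervalIntegral.integral_of_le hab.le]
      apply MeasureTheory.setIntegral_congr_fun measurableSet_Ioc
      intro s hs
      have := hode s (Set.Ioc_subset_Icc_self hs)
      simp only [this, add_mul]
    rw [step1, intervalIntegral.integral_add i1 i2, intervalIntegral.integral_const_mul,
      hwint a haIcc, key.symm]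
    have step2 : (∫ x in a..b, h x * ∫ s in x..b, w s)
        = ∫ x in a..b, (h x * (starRingEnd ℂ) (E b) - h x * (starRingEnd ℂ) (E x)) := by
      rw [intervalIntegral.integral_of_le hab.le, intervalIntegral.integral_of_le hab.le]
      apply MeasureTheory.setIntegral_congr_fun measurableSet_Ioc
      intro x hx
      dsimp only
      rw [hwint x (Set.Ioc_subset_Icc_self hx), mul_sub]
    rw [step2, intervalIntegral.integral_sub i3 i4, intervalIntegral.integral_mul_const]
    ring
  -- final: take imaginary parts
  have hggb : gg b = gg a + ∫ s in a..b, h s := hode b hbIcc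
  have final : gg b * (starRingEnd ℂ) (E b) - gg a * (starRingEnd ℂ) (E a)
      = (∫ s in a..b, h s * (starRingEnd ℂ) (E s)) + ∫ s in a..b, gg s * w s := by
    rw [EQ, hggb]; ring
  have im1 : (∫ s in a..b, h s * (starRingEnd ℂ) (E s)).im = 0 := by
    have : ∀ s, h s * (starRingEnd ℂ) (E s) = ((q s * Complex.normSq (E s) : ℝ) : ℂ) := by
      intro s
      simp only [hh]
      rw [mul_assoc, Complex.mul_conj]
      norm_cast
    simp only [this]
    rw [intervalIntegral.integral_ofReal]
    simp
  have im2 : (∫ s in a..b, gg s * w s).im = 0 := by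
    have : ∀ s, gg s * w s = ((Complex.normSq (gg s) : ℝ) : ℂ) := by
      intro s
      rw [hw, Complex.mul_conj]
    simp only [this]
    rw [intervalIntegral.integral_ofReal]
    simp
  have := congrArg Complex.im final
  simp only [Complex.sub_im, Complex.add_im, im1, im2, add_zero, zero_add] at this
  linarith

/-- If `l` is a non-real Dirichlet eigenvalue of
`-y'' + q y = l·Σᵢ mᵢ δ(x-tᵢ)·y`, `y(0)=y(1)=0`, with real `q ∈ L¹` and
`mᵢ > 0`, and `E` is a corresponding eigenfunction (Carathéodory solution on
each `[tᵢ, tᵢ₊₁]`, derivative functions `g i`, with jump conditions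
`E'(tᵢ⁻) - E'(tᵢ⁺) = l·mᵢ·E(tᵢ)`), then `E(tᵢ) = 0` for all `i = 0,…,n+1`. -/
theorem stmt_18 (n : ℕ) (q : ℝ → ℝ) (m t : ℕ → ℝ) (l : ℂ)
    (hq : MeasureTheory.IntegrableOn q (Set.Icc 0 1))
    (hm : ∀ i, 1 ≤ i → i ≤ n → 0 < m i)
    (ht0 : t 0 = 0) (ht1 : t (n+1) = 1)
    (htmono : ∀ i ≤ n, t i < t (i+1))
    (hl : l.im ≠ 0)
    (E : ℝ → ℂ) (g : ℕ → ℝ → ℂ)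
    (hEc : ContinuousOn E (Set.Icc 0 1))
    (hEderiv : ∀ i ≤ n, ∀ x ∈ Set.Icc (t i) (t (i+1)),
      HasDerivWithinAt E (g i x) (Set.Icc (t i) (t (i+1))) x)
    (hEode : ∀ i ≤ n, ∀ x ∈ Set.Icc (t i) (t (i+1)),
      g i x = g i (t i) + ∫ s in (t i)..x, (q s : ℂ) * E s)
    (hjump : ∀ i, 1 ≤ i → i ≤ n → g (i-1) (t i) - g i (t i) = l * (m i : ℂ) * E (t i))
    (hE0 : E 0 = 0) (hE1 : E 1 = 0)
    (hEne : ∃ x ∈ Set.Icc (0:ℝ) 1, E x ≠ 0) :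
    ∀ i ≤ n + 1, E (t i) = 0 := by
  -- monotonicity of the nodes
  have tmono : ∀ j ≤ n + 1, ∀ i ≤ j, t i ≤ t j := by
    intro j
    induction j with
    | zero =>
      intro _ i hi
      have : i = 0 := by omega
      rw [this]
    | succ k ih =>
      intro hk i hi
      rcases Nat.lt_or_ge i (k+1) with hlt | hge
      · have h1 : t i ≤ t k := ih (by omega) i (by omega)
        exact h1.trans (htmono k (by omega)).le
      · have : i = k + 1 := by omega
        rw [this]
  have hmem : ∀ i ≤ n + 1, t i ∈ Set.Icc (0:ℝ) 1 := by
    intro i hi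
    constructor
    · rw [← ht0]; exact tmono i hi 0 (by omega)
    · rw [← ht1]; exact tmono (n+1) le_rfl i hi
  -- Green identity on each interval
  have claim1 : ∀ i ≤ n, (g i (t (i+1)) * (starRingEnd ℂ) (E (t (i+1)))).im
      = (g i (t i) * (starRingEnd ℂ) (E (t i))).im := by
    intro i hi
    have hsub : Set.Icc (t i) (t (i+1)) ⊆ Set.Icc 0 1 :=
      Set.Icc_subset_Icc (hmem i (by omega)).1 (hmem (i+1) (by omega)).2
    exact green_identity (t i) (t (i+1)) (htmono i hi) q E (g i)
      (hq.mono_set hsub) (hEc.mono hsub) (hEderiv i hi) (hEode i hi)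
  have hEt0 : E (t 0) = 0 := by rw [ht0]; exact hE0
  have hEt1 : E (t (n+1)) = 0 := by rw [ht1]; exact hE1
  -- inductive computation
  have main : ∀ i ≤ n, (g i (t i) * (starRingEnd ℂ) (E (t i))).im
      = - l.im * ∑ j ∈ Finset.Icc 1 i, m j * Complex.normSq (E (t j)) := by
    intro i
    induction i with
    | zero => intro _; simp [hEt0]
    | succ k ih =>
      intro hk
      have hk' : k ≤ n := by omega
      have ihk := ih hk'
      have jump := hjump (k+1) (by omega) hk
      have hred : (k+1) - 1 = k := rfl
      rw [hred] at jump
      have hgk : g k (t (k+1)) = g (k+1) (t (k+1)) + l * (m (k+1) : ℂ) * E (t (k+1)) := by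
        linear_combination jump
      have c1 := claim1 k hk'
      rw [hgk, add_mul, Complex.add_im] at c1
      have himl : (l * (m (k+1) : ℂ) * E (t (k+1)) * (starRingEnd ℂ) (E (t (k+1)))).im
          = l.im * (m (k+1) * Complex.normSq (E (t (k+1)))) := by
        rw [mul_assoc, Complex.mul_conj, mul_assoc, ← Complex.ofReal_mul]
        simp [Complex.mul_im]
      rw [himl, ihk] at c1
      rw [Finset.sum_Icc_succ_top (by omega : 1 ≤ k + 1)]
      linarith
  -- the total sum vanishes
  have c1n := claim1 n le_rfl
  rw [main n le_rfl, hEt1] at c1n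
  simp only [map_zero, mul_zero, Complex.zero_im] at c1n
  have hsum : ∑ j ∈ Finset.Icc 1 n, m j * Complex.normSq (E (t j)) = 0 := by
    rcases mul_eq_zero.mp c1n.symm with h | h
    · exact absurd (neg_eq_zero.mp h) hl
    · exact h
  have hterm : ∀ j ∈ Finset.Icc 1 n, m j * Complex.normSq (E (t j)) = 0 := by
    refine (Finset.sum_eq_zero_iff_of_nonneg ?_).mp hsum
    intro j hj
    rw [Finset.mem_Icc] at hj
    exact mul_nonneg (hm j hj.1 hj.2).le (Complex.normSq_nonneg _)
  intro i hi
  rcases Nat.eq_zero_or_pos i with h0 | h1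
  · rw [h0]; exact hEt0
  rcases Nat.lt_or_ge i (n+1) with hlt | hge
  · have hin : i ≤ n := by omega
    have h2 := hterm i (Finset.mem_Icc.mpr ⟨h1, hin⟩)
    have hmi := hm i h1 hin
    have h3 : Complex.normSq (E (t i)) = 0 := by
      rcases mul_eq_zero.mp h2 with h | h
      · exact absurd h hmi.ne'
      · exact h
    exact Complex.normSq_eq_zero.mp h3
  · have : i = n + 1 := by omega
    rw [this]; exact hEt1
end
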